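/- arXiv:2102.03862 — 6 statements merged into one kernel-verified Lean document; each statement's English description precedes it below -/
import Mathlib

section
/- Let (x_i, v_i)_{i=1}^N be a C¹ solution of the open-loop flocking-with-steering system on [0,∞), and fix θ > 0. For almost every t ≥ 0, the velocity diameter d_V is differentiable at t and there exist indices p, q with d_V(t) = ‖v_p(t) − v_q(t)‖ such that d_V'(t) ≤ −α₀(t) · λ_{pq}(θ,t)² · θ² · d_V(t) + d_β(t), where α₀(t) = min_{1≤i≤N} α_i(t) and λ_{pq}(θ,t) is the number of indices j with a_{pj}(t) ≥ θ and a_{qj}(t) ≥ θ. -/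
open MeasureTheory Set Filter

/-- Diameter (maximum pairwise distance) of a finite family of trajectories at time `t`. -/
noncomputable def pairDiam {N d : ℕ} (f : Fin N → ℝ → EuclideanSpace ℝ (Fin d)) (t : ℝ) : ℝ :=
  ⨆ p : Fin N × Fin N, ‖f p.1 t - f p.2 t‖

open Topology
open scoped RealInnerProductSpace

lemma pairDiam_le_bound {N d : ℕ} (f : Fin N → ℝ → EuclideanSpace ℝ (Fin d)) (t : ℝ)
    (p q : Fin N) : ‖f p t - f q t‖ ≤ pairDiam f t :=
  le_ciSup (f := fun r : Fin N × Fin N => ‖f r.1 t - f r.2 t‖)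
    ((Set.finite_range _).bddAbove) ((p, q) : Fin N × Fin N)

lemma pairDiam_nonneg {N d : ℕ} [NeZero N] (f : Fin N → ℝ → EuclideanSpace ℝ (Fin d)) (t : ℝ) :
    0 ≤ pairDiam f t := by
  have := pairDiam_le_bound f t 0 0
  simpa using this

lemma pairDiam_lipschitzOnWith {N d : ℕ} [NeZero N]
    (f : Fin N → ℝ → EuclideanSpace ℝ (Fin d)) (K : NNReal) (s : Set ℝ)
    (hf : ∀ i, LipschitzOnWith K (f i) s) :
    LipschitzOnWith (2 * K) (pairDiam f) s := by
  apply LipschitzOnWith.of_dist_le_mul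
  have key : ∀ t ∈ s, ∀ u ∈ s, pairDiam f t - pairDiam f u ≤ 2 * K * dist t u := by
    intro t ht u hu
    rw [sub_le_iff_le_add]
    apply ciSup_le
    intro p
    have e1 := (hf p.1).dist_le_mul t ht u hu
    have e2 := (hf p.2).dist_le_mul t ht u hu
    rw [dist_eq_norm] at e1 e2
    have h1 : ‖f p.1 t - f p.2 t‖ - ‖f p.1 u - f p.2 u‖ ≤
        ‖(f p.1 t - f p.2 t) - (f p.1 u - f p.2 u)‖ := norm_sub_norm_le _ _
    have h2 : ‖(f p.1 t - f p.2 t) - (f p.1 u - f p.2 u)‖ ≤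
        ‖f p.1 t - f p.1 u‖ + ‖f p.2 t - f p.2 u‖ := by
      have h3 : (f p.1 t - f p.2 t) - (f p.1 u - f p.2 u)
          = (f p.1 t - f p.1 u) - (f p.2 t - f p.2 u) := by abel
      rw [h3]; exact norm_sub_le _ _
    have h4 := pairDiam_le_bound f u p.1 p.2
    have hd : (0:ℝ) ≤ dist t u := dist_nonneg
    push_cast
    nlinarith [Real.dist_eq t u, abs_nonneg (t - u)]
  intro t ht u hu
  rw [Real.dist_eq, abs_sub_le_iff]
  constructor
  · have := key t ht u hu; rw [Real.dist_eq] at *; push_cast at *; linarith [this]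
  · have := key u hu t ht
    rw [dist_comm] at this
    rw [Real.dist_eq] at *; push_cast at *; linarith [this]

set_option maxHeartbeats 1600000 in
lemma key_step {N d : ℕ} (hN : 2 ≤ N) {θ : ℝ} (hθ : 0 < θ)
    (v β : Fin N → ℝ → EuclideanSpace ℝ (Fin d))
    (a : Fin N → Fin N → ℝ → ℝ) (α : Fin N → ℝ → ℝ)
    (ha_nonneg : ∀ i j, ∀ t ∈ Ici (0:ℝ), 0 ≤ a i j t)
    (ha_sum : ∀ i, ∀ t ∈ Ici (0:ℝ), ∑ j, a i j t = 1)
    (hα_nonneg : ∀ i, ∀ t ∈ Ici (0:ℝ), 0 ≤ α i t)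
    (hv : ∀ i, ∀ t ∈ Ici (0:ℝ), HasDerivWithinAt (v i)
        (α i t • ((∑ j, a i j t • v j t) - v i t) + β i t) (Ici 0) t)
    {t : ℝ} (ht : 0 < t) (hF : DifferentiableAt ℝ (pairDiam v) t) :
    ∃ D, HasDerivAt (pairDiam v) D t ∧
        ∃ p q : Fin N, pairDiam v t = ‖v p t - v q t‖ ∧
          D ≤ -(⨅ i, α i t) *
                ((Finset.univ.filter fun j => θ ≤ a p j t ∧ θ ≤ a q j t).card : ℝ) ^ 2 *
                θ ^ 2 * pairDiam v t
              + pairDiam β t := by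
  haveI : NeZero N := ⟨by omega⟩
  have htI : t ∈ Ici (0:ℝ) := le_of_lt ht
  have hnhds : Ici (0:ℝ) ∈ 𝓝 t := Ici_mem_nhds ht
  set V : Fin N → EuclideanSpace ℝ (Fin d) :=
    fun i => α i t • ((∑ j, a i j t • v j t) - v i t) + β i t with hVdef
  have hvd : ∀ i, HasDerivAt (v i) (V i) t := fun i => (hv i t htI).hasDerivAt hnhds
  clear_value V
  obtain ⟨m, hm⟩ := Finite.exists_max (fun r : Fin N × Fin N => ‖v r.1 t - v r.2 t‖)
  obtain ⟨p, q⟩ := m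
  have hFt : pairDiam v t = ‖v p t - v q t‖ :=
    le_antisymm (ciSup_le fun r => hm r) (pairDiam_le_bound v t p q)
  refine ⟨deriv (pairDiam v) t, hF.hasDerivAt, p, q, hFt, ?_⟩
  set u : EuclideanSpace ℝ (Fin d) := v p t - v q t with hudef
  clear_value u
  by_cases hu : u = 0
  · -- trivial case : diameter is 0
    have hF0 : pairDiam v t = 0 := by rw [hFt, hu, norm_zero]
    have hmin : IsLocalMin (pairDiam v) t :=
      Filter.Eventually.of_forall fun s => by
        rw [hF0]; exact pairDiam_nonneg v s
    have hD0 : deriv (pairDiam v) t = 0 := hmin.deriv_eq_zero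
    rw [hD0, hF0, mul_zero, zero_add]
    exact pairDiam_nonneg β t
  · have hu0 : (0:ℝ) < ‖u‖ := norm_pos_iff.2 hu
    -- derivative of the attaining distance function
    have hdsub : HasDerivAt (fun s => v p s - v q s) (V p - V q) t := (hvd p).sub (hvd q)
    have hinner : HasDerivAt (fun s => ⟪v p s - v q s, v p s - v q s⟫)
        (⟪u, V p - V q⟫ + ⟪V p - V q, u⟫) t := by
      have h := HasDerivAt.inner ℝ hdsub hdsub
      rwa [← hudef] at h
    have hne : ⟪v p t - v q t, v p t - v q t⟫ ≠ 0 := by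
      rw [← hudef, real_inner_self_eq_norm_sq]
      positivity
    have hsq := hinner.sqrt hne
    have hgderiv : HasDerivAt (fun s => ‖v p s - v q s‖) (⟪u, V p - V q⟫ / ‖u‖) t := by
      have hfun : (fun s => Real.sqrt ⟪v p s - v q s, v p s - v q s⟫)
          = fun s => ‖v p s - v q s‖ := by
        funext s
        rw [real_inner_self_eq_norm_mul_norm, Real.sqrt_mul_self (norm_nonneg _)]
      rw [hfun] at hsq
      convert hsq using 1
      rw [real_inner_comm (V p - V q) u, ← hudef, real_inner_self_eq_norm_mul_norm,
        Real.sqrt_mul_self (norm_nonneg _)]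
      field_simp
      ring
    -- identify the derivative of pairDiam with that of g
    have hmin : IsLocalMin (fun s => pairDiam v s - ‖v p s - v q s‖) t :=
      Filter.Eventually.of_forall fun s => by
        have h1 := pairDiam_le_bound v s p q
        show pairDiam v t - ‖v p t - v q t‖ ≤ pairDiam v s - ‖v p s - v q s‖
        rw [hFt, hudef]
        linarith
    have hzero : deriv (pairDiam v) t - ⟪u, V p - V q⟫ / ‖u‖ = 0 :=
      hmin.hasDerivAt_eq_zero (hF.hasDerivAt.sub hgderiv)
    -- notation
    set α0 := ⨅ i, α i t with hα0def
    set Λ := (Finset.univ.filter fun j => θ ≤ a p j t ∧ θ ≤ a q j t) with hΛdef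
    set lam := (Λ.card : ℝ) with hlamdef
    have hlamnn : (0:ℝ) ≤ lam := Nat.cast_nonneg _
    have hα0le : ∀ i, α0 ≤ α i t := fun i =>
      ciInf_le ((Set.finite_range _).bddBelow) i
    have hα0nn : 0 ≤ α0 := le_ciInf fun i => hα_nonneg i t htI
    -- pointwise sign facts
    have he : ∀ j, ⟪u, v j t - v p t⟫ ≤ 0 := by
      intro j
      have hrw : v j t - v p t = (v j t - v q t) - u := by rw [hudef]; abel
      rw [hrw, inner_sub_right]
      have h2 : ⟪u, v j t - v q t⟫ ≤ ‖u‖ * ‖v j t - v q t‖ := real_inner_le_norm _ _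
      have h3 : ‖v j t - v q t‖ ≤ ‖u‖ := hm (j, q)
      have h4 : ⟪u, u⟫ = ‖u‖ * ‖u‖ := real_inner_self_eq_norm_mul_norm _
      nlinarith [norm_nonneg u]
    have hf : ∀ j, ⟪u, v q t - v j t⟫ ≤ 0 := by
      intro j
      have hrw : v q t - v j t = (v p t - v j t) - u := by rw [hudef]; abel
      rw [hrw, inner_sub_right]
      have h2 : ⟪u, v p t - v j t⟫ ≤ ‖u‖ * ‖v p t - v j t‖ := real_inner_le_norm _ _
      have h3 : ‖v p t - v j t‖ ≤ ‖u‖ := hm (p, j)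
      have h4 : ⟪u, u⟫ = ‖u‖ * ‖u‖ := real_inner_self_eq_norm_mul_norm _
      nlinarith [norm_nonneg u]
    -- sums
    have hSp : (∑ j, a p j t • v j t) - v p t = ∑ j, a p j t • (v j t - v p t) := by
      simp only [smul_sub]
      rw [Finset.sum_sub_distrib, ← Finset.sum_smul, ha_sum p t htI, one_smul]
    have hSq : v q t - (∑ j, a q j t • v j t) = ∑ j, a q j t • (v q t - v j t) := by
      simp only [smul_sub]
      rw [Finset.sum_sub_distrib, ← Finset.sum_smul, ha_sum q t htI, one_smul]
    have hTp : ⟪u, (∑ j, a p j t • v j t) - v p t⟫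
        = ∑ j, a p j t * ⟪u, v j t - v p t⟫ := by
      rw [hSp, inner_sum]
      exact Finset.sum_congr rfl fun j _ => real_inner_smul_right _ _ _
    have hTq : ⟪u, v q t - (∑ j, a q j t • v j t)⟫
        = ∑ j, a q j t * ⟪u, v q t - v j t⟫ := by
      rw [hSq, inner_sum]
      exact Finset.sum_congr rfl fun j _ => real_inner_smul_right _ _ _
    -- bounding the sums by the active set
    have hboundp : ∑ j, a p j t * ⟪u, v j t - v p t⟫ ≤ θ * ∑ j ∈ Λ, ⟪u, v j t - v p t⟫ := by
      have hsplit := Finset.sum_filter_add_sum_filter_not Finset.univ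
        (fun j => θ ≤ a p j t ∧ θ ≤ a q j t) (fun j => a p j t * ⟪u, v j t - v p t⟫)
      have h1 : ∑ j ∈ Finset.univ.filter (fun j => ¬(θ ≤ a p j t ∧ θ ≤ a q j t)),
          a p j t * ⟪u, v j t - v p t⟫ ≤ 0 :=
        Finset.sum_nonpos fun j _ =>
          mul_nonpos_iff.2 (Or.inl ⟨ha_nonneg p j t htI, he j⟩)
      have h2 : ∑ j ∈ Λ, a p j t * ⟪u, v j t - v p t⟫
          ≤ ∑ j ∈ Λ, θ * ⟪u, v j t - v p t⟫ :=
        Finset.sum_le_sum fun j hj =>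
          mul_le_mul_of_nonpos_right (Finset.mem_filter.1 hj).2.1 (he j)
      rw [hΛdef, Finset.mul_sum, ← hsplit]
      rw [hΛdef] at h2
      linarith
    have hboundq : ∑ j, a q j t * ⟪u, v q t - v j t⟫ ≤ θ * ∑ j ∈ Λ, ⟪u, v q t - v j t⟫ := by
      have hsplit := Finset.sum_filter_add_sum_filter_not Finset.univ
        (fun j => θ ≤ a p j t ∧ θ ≤ a q j t) (fun j => a q j t * ⟪u, v q t - v j t⟫)
      have h1 : ∑ j ∈ Finset.univ.filter (fun j => ¬(θ ≤ a p j t ∧ θ ≤ a q j t)),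
          a q j t * ⟪u, v q t - v j t⟫ ≤ 0 :=
        Finset.sum_nonpos fun j _ =>
          mul_nonpos_iff.2 (Or.inl ⟨ha_nonneg q j t htI, hf j⟩)
      have h2 : ∑ j ∈ Λ, a q j t * ⟪u, v q t - v j t⟫
          ≤ ∑ j ∈ Λ, θ * ⟪u, v q t - v j t⟫ :=
        Finset.sum_le_sum fun j hj =>
          mul_le_mul_of_nonpos_right (Finset.mem_filter.1 hj).2.2 (hf j)
      rw [hΛdef, Finset.mul_sum, ← hsplit]
      rw [hΛdef] at h2
      linarith
    have hTpnp : ∑ j, a p j t * ⟪u, v j t - v p t⟫ ≤ 0 :=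
      Finset.sum_nonpos fun j _ => mul_nonpos_iff.2 (Or.inl ⟨ha_nonneg p j t htI, he j⟩)
    have hTqnp : ∑ j, a q j t * ⟪u, v q t - v j t⟫ ≤ 0 :=
      Finset.sum_nonpos fun j _ => mul_nonpos_iff.2 (Or.inl ⟨ha_nonneg q j t htI, hf j⟩)
    -- sum over the active set
    have hef : ∑ j ∈ Λ, ⟪u, v j t - v p t⟫ + ∑ j ∈ Λ, ⟪u, v q t - v j t⟫
        = lam * (-(‖u‖ ^ 2)) := by
      rw [← Finset.sum_add_distrib]
      have : ∀ j ∈ Λ, ⟪u, v j t - v p t⟫ + ⟪u, v q t - v j t⟫ = -(‖u‖ ^ 2) := by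
        intro j _
        rw [← inner_add_right]
        have hrw : (v j t - v p t) + (v q t - v j t) = -u := by rw [hudef]; abel
        rw [hrw, inner_neg_right, real_inner_self_eq_norm_sq]
      rw [Finset.sum_congr rfl this, Finset.sum_const, nsmul_eq_mul, hlamdef]
    -- θ·lam ≤ 1
    have hcard : θ * lam ≤ 1 := by
      have h1 : ∑ _j ∈ Λ, θ ≤ ∑ j ∈ Λ, a p j t :=
        Finset.sum_le_sum fun j hj => (Finset.mem_filter.1 hj).2.1
      have h2 : ∑ j ∈ Λ, a p j t ≤ ∑ j, a p j t :=
        Finset.sum_le_sum_of_subset_of_nonneg (Finset.subset_univ _)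
          (fun j _ _ => ha_nonneg p j t htI)
      rw [Finset.sum_const, nsmul_eq_mul] at h1
      rw [ha_sum p t htI] at h2
      rw [hlamdef]
      nlinarith
    -- the inner product with the derivative
    have hwinner : ⟪u, V p - V q⟫
        = α p t * ⟪u, (∑ j, a p j t • v j t) - v p t⟫
          + α q t * ⟪u, v q t - (∑ j, a q j t • v j t)⟫
          + ⟪u, β p t - β q t⟫ := by
      simp only [hVdef]
      simp only [inner_sub_right, inner_add_right, real_inner_smul_right]
      ring
    have hβb : ⟪u, β p t - β q t⟫ ≤ ‖u‖ * pairDiam β t := by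
      have h1 : ⟪u, β p t - β q t⟫ ≤ ‖u‖ * ‖β p t - β q t‖ := real_inner_le_norm _ _
      have h2 := pairDiam_le_bound β t p q
      have h3 := mul_le_mul_of_nonneg_left h2 (norm_nonneg u)
      linarith
    -- final chain
    have hkey : ⟪u, V p - V q⟫ ≤ -(α0 * θ * lam * ‖u‖ ^ 2) + ‖u‖ * pairDiam β t := by
      have hp1 : α p t * ⟪u, (∑ j, a p j t • v j t) - v p t⟫
          ≤ α0 * ⟪u, (∑ j, a p j t • v j t) - v p t⟫ :=
        mul_le_mul_of_nonpos_right (hα0le p) (by rw [hTp]; exact hTpnp)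
      have hq1 : α q t * ⟪u, v q t - (∑ j, a q j t • v j t)⟫
          ≤ α0 * ⟪u, v q t - (∑ j, a q j t • v j t)⟫ :=
        mul_le_mul_of_nonpos_right (hα0le q) (by rw [hTq]; exact hTqnp)
      have hp2 : α0 * ⟪u, (∑ j, a p j t • v j t) - v p t⟫
          ≤ α0 * (θ * ∑ j ∈ Λ, ⟪u, v j t - v p t⟫) := by
        apply mul_le_mul_of_nonneg_left _ hα0nn
        rw [hTp]; exact hboundp
      have hq2 : α0 * ⟪u, v q t - (∑ j, a q j t • v j t)⟫
          ≤ α0 * (θ * ∑ j ∈ Λ, ⟪u, v q t - v j t⟫) := by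
        apply mul_le_mul_of_nonneg_left _ hα0nn
        rw [hTq]; exact hboundq
      have hcomb : α0 * (θ * ∑ j ∈ Λ, ⟪u, v j t - v p t⟫)
          + α0 * (θ * ∑ j ∈ Λ, ⟪u, v q t - v j t⟫)
          = -(α0 * θ * lam * ‖u‖ ^ 2) := by
        calc α0 * (θ * ∑ j ∈ Λ, ⟪u, v j t - v p t⟫)
            + α0 * (θ * ∑ j ∈ Λ, ⟪u, v q t - v j t⟫)
            = α0 * θ * (∑ j ∈ Λ, ⟪u, v j t - v p t⟫ + ∑ j ∈ Λ, ⟪u, v q t - v j t⟫) := by ring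
          _ = α0 * θ * (lam * (-(‖u‖ ^ 2))) := by rw [hef]
          _ = -(α0 * θ * lam * ‖u‖ ^ 2) := by ring
      rw [hwinner]
      linarith
    -- conclude
    have hD : deriv (pairDiam v) t = ⟪u, V p - V q⟫ / ‖u‖ := by linarith
    rw [hD, hFt]
    rw [div_le_iff₀ hu0]
    have hfinal : -(α0 * θ * lam * ‖u‖ ^ 2) ≤ -α0 * lam ^ 2 * θ ^ 2 * ‖u‖ * ‖u‖ := by
      nlinarith [mul_nonneg (mul_nonneg (mul_nonneg hα0nn hθ.le) hlamnn) (sq_nonneg ‖u‖),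
        mul_nonneg (mul_nonneg (mul_nonneg hα0nn hθ.le) hlamnn)
          (mul_nonneg hu0.le hu0.le)]
    calc ⟪u, V p - V q⟫ ≤ -(α0 * θ * lam * ‖u‖ ^ 2) + ‖u‖ * pairDiam β t := hkey
      _ ≤ -α0 * lam ^ 2 * θ ^ 2 * ‖u‖ * ‖u‖ + pairDiam β t * ‖u‖ := by
          rw [mul_comm ‖u‖ (pairDiam β t)]; linarith
      _ = (-α0 * lam ^ 2 * θ ^ 2 * ‖u‖ + pairDiam β t) * ‖u‖ := by ring

/-- For a `C¹` solution of the open-loop flocking-with-steering system on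
`[0,∞)` and fixed `θ > 0`, for almost every `t ≥ 0` the velocity diameter `d_V` is
differentiable at `t` and there are indices `p, q` attaining the diameter with
`d_V'(t) ≤ -α₀(t) · λ_{pq}(θ,t)² · θ² · d_V(t) + d_β(t)`. -/
theorem velocity_diameter_decay_active_set
    (N d : ℕ) (hN : 2 ≤ N) (θ : ℝ) (hθ : 0 < θ)
    (x v β : Fin N → ℝ → EuclideanSpace ℝ (Fin d))
    (a : Fin N → Fin N → ℝ → ℝ) (α : Fin N → ℝ → ℝ)
    (ha_cont : ∀ i j, ContinuousOn (a i j) (Ici 0))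
    (ha_nonneg : ∀ i j, ∀ t ∈ Ici (0:ℝ), 0 ≤ a i j t)
    (ha_sum : ∀ i, ∀ t ∈ Ici (0:ℝ), ∑ j, a i j t = 1)
    (hα_cont : ∀ i, ContinuousOn (α i) (Ici 0))
    (hα_nonneg : ∀ i, ∀ t ∈ Ici (0:ℝ), 0 ≤ α i t)
    (hβ_cont : ∀ i, ContinuousOn (β i) (Ici 0))
    (hx : ∀ i, ∀ t ∈ Ici (0:ℝ), HasDerivWithinAt (x i) (v i t) (Ici 0) t)
    (hv : ∀ i, ∀ t ∈ Ici (0:ℝ),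
      HasDerivWithinAt (v i)
        (α i t • ((∑ j, a i j t • v j t) - v i t) + β i t) (Ici 0) t) :
    ∀ᵐ t ∂(volume.restrict (Ici (0:ℝ))),
      ∃ D, HasDerivAt (pairDiam v) D t ∧
        ∃ p q : Fin N, pairDiam v t = ‖v p t - v q t‖ ∧
          D ≤ -(⨅ i, α i t) *
                ((Finset.univ.filter fun j => θ ≤ a p j t ∧ θ ≤ a q j t).card : ℝ) ^ 2 *
                θ ^ 2 * pairDiam v t
              + pairDiam β t := by
  haveI : NeZero N := ⟨by omega⟩
  have hvc : ∀ i, ContinuousOn (v i) (Ici 0) := fun i t ht =>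
    (hv i t ht).continuousWithinAt
  have hVc : ∀ i, ContinuousOn
      (fun t => α i t • ((∑ j, a i j t • v j t) - v i t) + β i t) (Ici 0) := by
    intro i
    apply ContinuousOn.add _ (hβ_cont i)
    apply ContinuousOn.smul (hα_cont i)
    apply ContinuousOn.sub _ (hvc i)
    exact continuousOn_finset_sum _ fun j _ => (ha_cont i j).smul (hvc j)
  have hdiff : ∀ n : ℕ, ∀ᵐ t ∂(volume : Measure ℝ), t ∈ Icc (0:ℝ) n →
      DifferentiableWithinAt ℝ (pairDiam v) (Icc (0:ℝ) n) t := by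
    intro n
    have hsum : ContinuousOn
        (fun t => ∑ i, ‖α i t • ((∑ j, a i j t • v j t) - v i t) + β i t‖) (Icc (0:ℝ) n) :=
      continuousOn_finset_sum _ fun i _ => ((hVc i).mono Icc_subset_Ici_self).norm
    obtain ⟨C, hC⟩ := isCompact_Icc.exists_bound_of_continuousOn hsum
    have hCb : ∀ i, ∀ t ∈ Icc (0:ℝ) n,
        ‖α i t • ((∑ j, a i j t • v j t) - v i t) + β i t‖ ≤ C := by
      intro i t htn
      have h1 := hC t htn
      have h2 : ‖α i t • ((∑ j, a i j t • v j t) - v i t) + β i t‖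
          ≤ ∑ i', ‖α i' t • ((∑ j, a i' j t • v j t) - v i' t) + β i' t‖ :=
        Finset.single_le_sum
          (f := fun i' => ‖α i' t • ((∑ j, a i' j t • v j t) - v i' t) + β i' t‖)
          (fun i' _ => norm_nonneg _) (Finset.mem_univ i)
      have h3 := le_abs_self
        (∑ i', ‖α i' t • ((∑ j, a i' j t • v j t) - v i' t) + β i' t‖)
      rw [Real.norm_eq_abs] at h1
      linarith
    have hlip : ∀ i, LipschitzOnWith C.toNNReal (v i) (Icc (0:ℝ) n) := by
      intro i
      apply (convex_Icc _ _).lipschitzOnWith_of_nnnorm_hasDerivWithin_le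
        (f' := fun t => α i t • ((∑ j, a i j t • v j t) - v i t) + β i t)
        (fun t htn => (hv i t (Icc_subset_Ici_self htn)).mono Icc_subset_Ici_self)
      intro t htn
      rw [← NNReal.coe_le_coe, coe_nnnorm, Real.coe_toNNReal']
      exact le_max_of_le_left (hCb i t htn)
    have hFlip := pairDiam_lipschitzOnWith v C.toNNReal _ hlip
    exact hFlip.ae_differentiableWithinAt_of_mem
  have hae : ∀ᵐ t ∂(volume : Measure ℝ), ∀ n : ℕ, t ∈ Icc (0:ℝ) n →
      DifferentiableWithinAt ℝ (pairDiam v) (Icc (0:ℝ) n) t := ae_all_iff.2 hdiff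
  have h0 : ∀ᵐ t : ℝ ∂volume, t ≠ 0 := by
    rw [ae_iff]
    simp [measure_singleton]
  rw [ae_restrict_iff' measurableSet_Ici]
  filter_upwards [hae, h0] with t hdt ht0 htIci
  have htpos : 0 < t := lt_of_le_of_ne htIci (Ne.symm ht0)
  obtain ⟨n, hn⟩ := exists_nat_gt t
  have hmem : Icc (0:ℝ) (n:ℝ) ∈ 𝓝 t := Icc_mem_nhds htpos hn
  have hFdiff : DifferentiableAt ℝ (pairDiam v) t :=
    (hdt n ⟨htpos.le, hn.le⟩).differentiableAt hmem
  exact key_step hN hθ v β a α ha_nonneg ha_sum hα_nonneg hv htpos hFdiff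
end

section
/- Let (x_i, v_i)_{i=1}^N be a C¹ solution of the open-loop flocking-with-steering system on [0,∞), fix θ > 0, let λ(θ,t) be the number of indices j with a_{ij}(t) ≥ θ for every i, and let ᾱ = inf over all i and all t ≥ 0 of α_i(t). Then for almost every t ≥ 0: d_X'(t) ≤ d_V(t) and d_V'(t) ≤ −ᾱ · λ(θ,t)² · θ² · d_V(t) + d_β(t). -/
/-!
Both diameters are maxima of finitely many functions that are Lipschitz on bounded intervals,
hence differentiable almost everywhere by Rademacher's theorem. At a point of differentiability
take a pair `(i, k)` realising the diameter and the unit vector `u` along it: the projection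
`s ↦ ⟪u, f i s - f k s⟫` touches the diameter from below at `t`, so the derivatives agree. For
positions this gives `d_X' = ⟪u, v i - v k⟫ ≤ d_V`. For velocities, `i` and `k` carry the extreme
projections `⟪u, v j⟫`, so both consensus terms point inward, and every agent of the global
active set contributes at least `θ d_V`; hence `d_V' ≤ -ᾱ λ θ d_V + d_β ≤ -ᾱ λ² θ² d_V + d_β`,
using `λ θ ≤ 1` (the weights of a row sum to `1`).
-/

open MeasureTheory Set Filter

open Finset
open scoped RealInnerProductSpace NNReal Topology

theorem HasDerivAt.eq_of_le_of_eq {F g : ℝ → ℝ} {D D' t : ℝ} (hF : HasDerivAt F D t)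
    (hg : HasDerivAt g D' t) (hle : g ≤ F) (heq : g t = F t) : D = D' := by
  have hmin : IsLocalMin (fun s => F s - g s) t :=
    Eventually.of_forall fun s => by simpa [heq] using hle s
  linarith [hmin.hasDerivAt_eq_zero (hF.sub hg)]

theorem LipschitzOnWith.ciSup {ι α : Type*} [PseudoMetricSpace α] [Finite ι] [Nonempty ι]
    {g : ι → α → ℝ} {K : ℝ≥0} {s : Set α} (hg : ∀ i, LipschitzOnWith K (g i) s) :
    LipschitzOnWith K (fun x => ⨆ i, g i x) s :=
  LipschitzOnWith.of_le_add_mul K fun x hx y hy => ciSup_le fun i =>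
    calc g i x ≤ g i y + K * dist x y := by
          have h := (hg i).dist_le_mul x hx y hy
          rw [Real.dist_eq] at h
          linarith [le_abs_self (g i x - g i y)]
      _ ≤ (⨆ i, g i y) + K * dist x y := by
          gcongr
          exact le_ciSup (f := fun i => g i y) (Set.finite_range _).bddAbove i

theorem ae_differentiableAt_of_lipschitzOnWith_Icc {g : ℝ → ℝ} {a : ℝ}
    (hg : ∀ b, ∃ K, LipschitzOnWith K g (Icc a b)) :
    ∀ᵐ t ∂volume.restrict (Ioi a), DifferentiableAt ℝ g t := by
  have h : ∀ n : ℕ, ∀ᵐ t, t ∈ Ioo a (a + n) → DifferentiableAt ℝ g t := fun n => by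
    obtain ⟨K, hK⟩ := hg (a + n)
    filter_upwards [hK.ae_differentiableWithinAt_of_mem] with t ht hmem
    exact (ht (Ioo_subset_Icc_self hmem)).differentiableAt (Icc_mem_nhds hmem.1 hmem.2)
  rw [ae_restrict_iff' measurableSet_Ioi]
  filter_upwards [ae_all_iff.2 h] with t ht hat
  obtain ⟨n, hn⟩ := exists_nat_gt (t - a)
  exact ht n ⟨hat, by linarith⟩

theorem exists_lipschitzOnWith_Icc_of_hasDerivWithinAt {E : Type*} [NormedAddCommGroup E]
    [NormedSpace ℝ E] {f f' : ℝ → E} {a : ℝ}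
    (hf : ∀ t ∈ Ici a, HasDerivWithinAt f (f' t) (Ici a) t) (hf' : ContinuousOn f' (Ici a))
    (b : ℝ) : ∃ K, LipschitzOnWith K f (Icc a b) := by
  obtain ⟨C, hC⟩ := isCompact_Icc.exists_bound_of_continuousOn (hf'.mono Icc_subset_Ici_self)
  refine ⟨C.toNNReal, (convex_Icc a b).lipschitzOnWith_of_nnnorm_hasDerivWithin_le
    (fun t ht => (hf t (Icc_subset_Ici_self ht)).mono Icc_subset_Ici_self) fun t ht => ?_⟩
  rw [← NNReal.coe_le_coe, coe_nnnorm]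
  exact (hC t ht).trans (Real.le_coe_toNNReal C)

section pairDiam

variable {N d : ℕ}

local notation "E" => EuclideanSpace ℝ (Fin d)

theorem norm_sub_le_pairDiam (f : Fin N → ℝ → E) (i j : Fin N) (t : ℝ) :
    ‖f i t - f j t‖ ≤ pairDiam f t :=
  le_ciSup (f := fun p : Fin N × Fin N => ‖f p.1 t - f p.2 t‖) (Set.finite_range _).bddAbove (i, j)

theorem inner_sub_le_pairDiam (f : Fin N → ℝ → E) {u : E} (hu : ‖u‖ ≤ 1) (i j : Fin N)
    (t : ℝ) : ⟪u, f i t - f j t⟫ ≤ pairDiam f t :=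
  calc ⟪u, f i t - f j t⟫ ≤ ‖u‖ * ‖f i t - f j t‖ := real_inner_le_norm _ _
    _ ≤ 1 * pairDiam f t := by gcongr; exact norm_sub_le_pairDiam f i j t
    _ = pairDiam f t := one_mul _

theorem exists_pairDiam_eq_norm_sub [NeZero N] (f : Fin N → ℝ → E) (t : ℝ) :
    ∃ i j, pairDiam f t = ‖f i t - f j t‖ := by
  obtain ⟨p, hp⟩ := Finite.exists_max fun p : Fin N × Fin N => ‖f p.1 t - f p.2 t‖
  exact ⟨p.1, p.2, le_antisymm (ciSup_le hp) (norm_sub_le_pairDiam f p.1 p.2 t)⟩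

theorem exists_lipschitzOnWith_pairDiam [NeZero N] {f : Fin N → ℝ → E} {s : Set ℝ}
    (hf : ∀ i, ∃ K, LipschitzOnWith K (f i) s) : ∃ K, LipschitzOnWith K (pairDiam f) s := by
  choose K hK using hf
  have hK_le : ∀ i, LipschitzOnWith (∑ j, K j) (f i) s := fun i =>
    (hK i).weaken (single_le_sum (fun j _ => zero_le) (mem_univ i))
  refine ⟨∑ j, K j + ∑ j, K j, LipschitzOnWith.ciSup fun p => ?_⟩
  simpa only [one_mul, Function.comp_def] using lipschitzWith_one_norm.comp_lipschitzOnWith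
    ((hK_le p.1).sub (hK_le p.2))

theorem ae_differentiableAt_pairDiam [NeZero N] {f f' : Fin N → ℝ → E} {a : ℝ}
    (hf : ∀ i, ∀ t ∈ Ici a, HasDerivWithinAt (f i) (f' i t) (Ici a) t)
    (hf' : ∀ i, ContinuousOn (f' i) (Ici a)) :
    ∀ᵐ t ∂volume.restrict (Ioi a), DifferentiableAt ℝ (pairDiam f) t :=
  ae_differentiableAt_of_lipschitzOnWith_Icc fun b => exists_lipschitzOnWith_pairDiam fun i =>
    exists_lipschitzOnWith_Icc_of_hasDerivWithinAt (hf i) (hf' i) b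

theorem exists_inner_eq_of_hasDerivAt_pairDiam [NeZero N] {f : Fin N → ℝ → E} {f' : Fin N → E}
    {D t : ℝ} (hD : HasDerivAt (pairDiam f) D t) (hf : ∀ i, HasDerivAt (f i) (f' i) t) :
    ∃ i j, ∃ u : E, ‖u‖ ≤ 1 ∧ ⟪u, f i t - f j t⟫ = pairDiam f t ∧ D = ⟪u, f' i - f' j⟫ := by
  obtain ⟨i, j, hij⟩ := exists_pairDiam_eq_norm_sub f t
  set w := f i t - f j t
  -- if `w = 0` then `u = 0` (as `0⁻¹ = 0`), and all three properties still hold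
  set u := ‖w‖⁻¹ • w
  have hu : ‖u‖ ≤ 1 := by
    rw [norm_smul, norm_inv, norm_norm]
    exact inv_mul_le_one_of_le₀ le_rfl (norm_nonneg w)
  have huw : ⟪u, w⟫ = pairDiam f t := by
    rw [real_inner_smul_left, real_inner_self_eq_norm_sq, hij]
    rcases eq_or_ne ‖w‖ 0 with h | h
    · simp [h]
    · field_simp
  refine ⟨i, j, u, hu, huw, hD.eq_of_le_of_eq
    ((innerSL ℝ u).hasFDerivAt.comp_hasDerivAt t ((hf i).sub (hf j)))
    (fun s => inner_sub_le_pairDiam f hu i j s) huw⟩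

end pairDiam

section Consensus

variable {ι : Type*} [Fintype ι]

theorem card_mul_le_one_of_le {w : ι → ℝ} (hw : ∀ j, 0 ≤ w j) (hw_sum : ∑ j, w j = 1)
    {S : Finset ι} {θ : ℝ} (hS : ∀ j ∈ S, θ ≤ w j) : #S * θ ≤ 1 :=
  calc #S * θ = #S • θ := (nsmul_eq_mul _ _).symm
    _ ≤ ∑ j ∈ S, w j := card_nsmul_le_sum S w θ hS
    _ ≤ ∑ j, w j := sum_le_univ_sum_of_nonneg hw
    _ = 1 := hw_sum

theorem sum_mul_sub_sub_sum_mul_sub_le {φ p q : ι → ℝ} {i k : ι} {S : Finset ι} {θ : ℝ}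
    (hp : ∀ j, 0 ≤ p j) (hq : ∀ j, 0 ≤ q j) (hi : ∀ j, φ j ≤ φ i) (hk : ∀ j, φ k ≤ φ j)
    (hS : ∀ j ∈ S, θ ≤ p j ∧ θ ≤ q j) :
    ∑ j, p j * (φ j - φ i) - ∑ j, q j * (φ j - φ k) ≤ -(#S * θ * (φ i - φ k)) := by
  have hterm : ∀ j, p j * (φ j - φ i) - q j * (φ j - φ k) ≤ 0 := fun j => by
    nlinarith [mul_nonpos_of_nonneg_of_nonpos (hp j) (sub_nonpos.2 (hi j)),
      mul_nonneg (hq j) (sub_nonneg.2 (hk j))]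
  have hterm_S : ∀ j ∈ S, p j * (φ j - φ i) - q j * (φ j - φ k) ≤ θ * (φ k - φ i) :=
    fun j hj => by
      nlinarith [mul_le_mul_of_nonpos_right (hS j hj).1 (sub_nonpos.2 (hi j)),
        mul_le_mul_of_nonneg_right (hS j hj).2 (sub_nonneg.2 (hk j))]
  calc ∑ j, p j * (φ j - φ i) - ∑ j, q j * (φ j - φ k)
      = ∑ j, (p j * (φ j - φ i) - q j * (φ j - φ k)) := (sum_sub_distrib ..).symm
    _ ≤ ∑ j ∈ S, (p j * (φ j - φ i) - q j * (φ j - φ k)) :=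
        sum_le_sum_of_subset_of_nonpos' (subset_univ S) fun j _ _ => hterm j
    _ ≤ ∑ _j ∈ S, θ * (φ k - φ i) := sum_le_sum hterm_S
    _ = -(#S * θ * (φ i - φ k)) := by rw [sum_const, nsmul_eq_mul]; ring

theorem inner_sum_smul_sub {E : Type*} [NormedAddCommGroup E] [InnerProductSpace ℝ E]
    {w : ι → ℝ} (hw_sum : ∑ j, w j = 1) (u : E) (y : ι → E) (z : E) :
    ⟪u, ∑ j, w j • y j - z⟫ = ∑ j, w j * (⟪u, y j⟫ - ⟪u, z⟫) := by
  simp only [inner_sub_right, inner_sum, real_inner_smul_right, mul_sub, sum_sub_distrib,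
    ← sum_mul, hw_sum, one_mul]

end Consensus

theorem inner_flocking_sub_le {N d : ℕ} {v β : Fin N → ℝ → EuclideanSpace ℝ (Fin d)}
    {a : Fin N → Fin N → ℝ} {α : Fin N → ℝ} {A θ t : ℝ} {u : EuclideanSpace ℝ (Fin d)}
    {i k : Fin N} (ha_nonneg : ∀ m j, 0 ≤ a m j) (ha_sum : ∀ m, ∑ j, a m j = 1) (hA : 0 ≤ A)
    (hAα : ∀ m, A ≤ α m) (hθ : 0 ≤ θ) (hu : ‖u‖ ≤ 1)
    (hik : ⟪u, v i t - v k t⟫ = pairDiam v t) :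
    ⟪u, (α i • (∑ j, a i j • v j t - v i t) + β i t)
        - (α k • (∑ j, a k j • v j t - v k t) + β k t)⟫
      ≤ -A * (#{j | ∀ m, θ ≤ a m j} : ℝ) ^ 2 * θ ^ 2 * pairDiam v t + pairDiam β t := by
  set φ : Fin N → ℝ := fun j => ⟪u, v j t⟫
  set S : Finset (Fin N) := {j | ∀ m, θ ≤ a m j}
  set Ti := ∑ j, a i j * (φ j - φ i)
  set Tk := ∑ j, a k j * (φ j - φ k)
  have hφ : ∀ j l, φ j - φ l ≤ pairDiam v t := fun j l => by
    simpa only [inner_sub_right] using inner_sub_le_pairDiam v hu j l t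
  have hφik : φ i - φ k = pairDiam v t := by simpa only [inner_sub_right] using hik
  have hi : ∀ j, φ j ≤ φ i := fun j => by linarith [hφ j k]
  have hk : ∀ j, φ k ≤ φ j := fun j => by linarith [hφ i j]
  have hTi : Ti ≤ 0 :=
    sum_nonpos fun j _ => mul_nonpos_of_nonneg_of_nonpos (ha_nonneg i j) (sub_nonpos.2 (hi j))
  have hTk : 0 ≤ Tk :=
    sum_nonneg fun j _ => mul_nonneg (ha_nonneg k j) (sub_nonneg.2 (hk j))
  have hTik : Ti - Tk ≤ -(#S * θ * pairDiam v t) := hφik ▸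
    sum_mul_sub_sub_sum_mul_sub_le (ha_nonneg i) (ha_nonneg k) hi hk
      fun j hj => ⟨(mem_filter.1 hj).2 i, (mem_filter.1 hj).2 k⟩
  have hSθ : #S * θ ≤ 1 :=
    card_mul_le_one_of_le (ha_nonneg i) (ha_sum i) fun j hj => (mem_filter.1 hj).2 i
  have hSθ_nonneg : 0 ≤ #S * θ := by positivity
  have hD_nonneg : 0 ≤ pairDiam v t := by linarith [hφ i i]
  have hβ := inner_sub_le_pairDiam β hu i k t
  calc ⟪u, (α i • (∑ j, a i j • v j t - v i t) + β i t)
          - (α k • (∑ j, a k j • v j t - v k t) + β k t)⟫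
      = α i * Ti - α k * Tk + ⟪u, β i t - β k t⟫ := by
        simp only [inner_sub_right, inner_add_right, real_inner_smul_right,
          inner_sum_smul_sub (ha_sum i), inner_sum_smul_sub (ha_sum k)]
        ring
    _ ≤ A * (Ti - Tk) + pairDiam β t := by
        linarith [mul_le_mul_of_nonpos_right (hAα i) hTi, mul_le_mul_of_nonneg_right (hAα k) hTk]
    _ ≤ -A * (#S * θ) * pairDiam v t + pairDiam β t := by
        linarith [mul_le_mul_of_nonneg_left hTik hA]
    _ ≤ -A * (#S * θ) ^ 2 * pairDiam v t + pairDiam β t := by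
        have hsq : (#S * θ) ^ 2 ≤ #S * θ := by nlinarith
        nlinarith [mul_le_mul_of_nonneg_left hsq (mul_nonneg hA hD_nonneg)]
    _ = -A * (#S : ℝ) ^ 2 * θ ^ 2 * pairDiam v t + pairDiam β t := by ring

/-- For a `C¹` solution of the open-loop flocking-with-steering system on
`[0,∞)`, fixed `θ > 0`, with `λ(θ,t)` the cardinality of the global active set and
`ᾱ = inf_{i, t ≥ 0} α_i(t)`, for almost every `t ≥ 0`:
`d_X'(t) ≤ d_V(t)` and `d_V'(t) ≤ -ᾱ λ(θ,t)² θ² d_V(t) + d_β(t)`. -/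
theorem diameter_system_differential_inequalities
    (N d : ℕ) (hN : 2 ≤ N) (θ : ℝ) (hθ : 0 < θ)
    (x v β : Fin N → ℝ → EuclideanSpace ℝ (Fin d))
    (a : Fin N → Fin N → ℝ → ℝ) (α : Fin N → ℝ → ℝ)
    (ha_cont : ∀ i j, ContinuousOn (a i j) (Ici 0))
    (ha_nonneg : ∀ i j, ∀ t ∈ Ici (0:ℝ), 0 ≤ a i j t)
    (ha_sum : ∀ i, ∀ t ∈ Ici (0:ℝ), ∑ j, a i j t = 1)
    (hα_cont : ∀ i, ContinuousOn (α i) (Ici 0))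
    (hα_nonneg : ∀ i, ∀ t ∈ Ici (0:ℝ), 0 ≤ α i t)
    (hβ_cont : ∀ i, ContinuousOn (β i) (Ici 0))
    (hx : ∀ i, ∀ t ∈ Ici (0:ℝ), HasDerivWithinAt (x i) (v i t) (Ici 0) t)
    (hv : ∀ i, ∀ t ∈ Ici (0:ℝ),
      HasDerivWithinAt (v i)
        (α i t • ((∑ j, a i j t • v j t) - v i t) + β i t) (Ici 0) t) :
    ∀ᵐ t ∂(volume.restrict (Ici (0:ℝ))),
      (∃ D, HasDerivAt (pairDiam x) D t ∧ D ≤ pairDiam v t) ∧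
      (∃ D, HasDerivAt (pairDiam v) D t ∧
        D ≤ -(⨅ p : Fin N × (Ici (0:ℝ)), α p.1 (p.2 : ℝ)) *
              ((Finset.univ.filter fun j => ∀ i, θ ≤ a i j t).card : ℝ) ^ 2 *
              θ ^ 2 * pairDiam v t
            + pairDiam β t) := by
  have : NeZero N := ⟨by omega⟩
  have hv_cont : ∀ i, ContinuousOn (v i) (Ici 0) := fun i t ht => (hv i t ht).continuousWithinAt
  have hv'_cont : ∀ i, ContinuousOn
      (fun t => α i t • ((∑ j, a i j t • v j t) - v i t) + β i t) (Ici 0) := fun i => by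
    fun_prop
  set A := ⨅ p : Fin N × (Ici (0:ℝ)), α p.1 (p.2 : ℝ)
  have hA : 0 ≤ A := Real.iInf_nonneg fun p => hα_nonneg p.1 p.2 p.2.2
  have hAα : ∀ m, ∀ t ∈ Ici (0:ℝ), A ≤ α m t := fun m t ht =>
    ciInf_le ⟨0, forall_mem_range.2 fun p : Fin N × Ici (0:ℝ) => hα_nonneg p.1 p.2 p.2.2⟩
      (m, ⟨t, ht⟩)
  rw [← Measure.restrict_congr_set Ioi_ae_eq_Ici]
  filter_upwards [ae_restrict_mem measurableSet_Ioi, ae_differentiableAt_pairDiam hx hv_cont,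
    ae_differentiableAt_pairDiam hv hv'_cont] with t ht hX hV
  have ht₀ : Ici (0:ℝ) ∈ 𝓝 t := Ici_mem_nhds ht
  have ht' : t ∈ Ici (0:ℝ) := Ioi_subset_Ici_self ht
  obtain ⟨i, k, u, hu, -, hDX⟩ := exists_inner_eq_of_hasDerivAt_pairDiam hX.hasDerivAt
    fun i => (hx i t ht').hasDerivAt ht₀
  obtain ⟨i', k', u', hu', hik', hDV⟩ := exists_inner_eq_of_hasDerivAt_pairDiam hV.hasDerivAt
    fun i => (hv i t ht').hasDerivAt ht₀
  have hV_rate := inner_flocking_sub_le (β := β) (fun m j => ha_nonneg m j t ht')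
    (fun m => ha_sum m t ht') hA (fun m => hAα m t ht') hθ.le hu' hik'
  exact ⟨⟨_, hX.hasDerivAt, hDX ▸ inner_sub_le_pairDiam v hu i k t⟩,
    ⟨_, hV.hasDerivAt, hDV ▸ hV_rate⟩⟩
end

section
/- Let (x_i, v_i)_{i=1}^N be a C¹ solution on [0,∞) of the flocking system with friction: x_i'(t) = v_i(t) and v_i'(t) = α_i(t)(v̄_i(t) − v_i(t)) − c_i ‖v_i(t)‖^r v_i(t), where v̄_i(t) = Σ_j a_{ij}(t) v_j(t), the a_{ij}(t) are nonnegative with Σ_j a_{ij}(t) = 1, α_i(t) ≥ 0, c_i > 0 and r ≥ 0. Then for each i, lim_{t→∞} v_i(t) = 0. -/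
/-!
Every speed stays below the common decaying barrier `u(t) = A (1 + t) ^ (-β)`, where `A` exceeds
all initial speeds and `β > 0` is small. At a first time `T` where some `‖v i‖` touches `u`, that
agent has the largest speed, so the weighted mean `∑ j, a i j T • v j T` lies in the ball of radius
`‖v i T‖` and alignment cannot increase `‖v i‖²`; friction then makes `‖v i‖²` decrease at rate
`2 c i u ^ (r + 2)`, faster than `u²` decays, which contradicts the touching from below.
-/

open Set Filter
open scoped Topology RealInnerProductSpace

theorem HasDerivWithinAt.nonneg_of_isMaxOn_Icc {f : ℝ → ℝ} {f' a T : ℝ} (haT : a < T)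
    (hf : HasDerivWithinAt f f' (Ici a) T) (hmax : IsMaxOn f (Icc a T) T) : 0 ≤ f' := by
  have hcone : a - T ∈ posTangentConeAt (Icc a T) T :=
    sub_mem_posTangentConeAt_of_segment_subset (segment_symm ℝ T a ▸ segment_subset_Icc haT.le)
  have h := hmax.localize.hasFDerivWithinAt_nonpos
    (hf.mono Icc_subset_Ici_self).hasFDerivWithinAt hcone
  simp only [ContinuousLinearMap.toSpanSingleton_apply, smul_eq_mul] at h
  nlinarith

theorem forall_neg_of_deriv_neg_at_first_zero {ι : Type*} [Finite ι] {g g' : ι → ℝ → ℝ}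
    {a : ℝ} (hg : ∀ i, ∀ t ∈ Ici a, HasDerivWithinAt (g i) (g' i t) (Ici a) t)
    (hga : ∀ i, g i a < 0)
    (hcross : ∀ i, ∀ T > a, g i T = 0 → (∀ j, g j T ≤ 0) → g' i T < 0) :
    ∀ i, ∀ t ∈ Ici a, g i t < 0 := by
  by_contra! hS
  obtain ⟨i₀, t₀, ht₀, hgt₀⟩ := hS
  have hcont : ∀ i, ContinuousOn (g i) (Ici a) := fun i t ht => (hg i t ht).continuousWithinAt
  set S := {t ∈ Ici a | ∃ i, 0 ≤ g i t}
  have hSclosed : IsClosed S := by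
    have hSunion : S = ⋃ i, {t ∈ Ici a | 0 ≤ g i t} := by ext; simp [S]
    rw [hSunion]
    exact isClosed_iUnion_of_finite fun i => isClosed_Ici.isClosed_le continuousOn_const (hcont i)
  have hSbdd : BddBelow S := ⟨a, fun t ht => ht.1⟩
  have hTS : sInf S ∈ S := hSclosed.csInf_mem ⟨t₀, ht₀, i₀, hgt₀⟩ hSbdd
  generalize hT : sInf S = T at hTS
  obtain ⟨haT, i, hi⟩ := hTS
  have hTa : a < T := haT.lt_of_ne (by rintro rfl; exact (hga i).not_ge hi)
  have hbefore : ∀ j, ∀ s ∈ Ico a T, g j s ≤ 0 := fun j s hs => by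
    by_contra! h
    exact (hT ▸ csInf_le hSbdd ⟨hs.1, j, h.le⟩).not_gt hs.2
  have hle : ∀ j, Icc a T ⊆ {s ∈ Ici a | g j s ≤ 0} := fun j =>
    closure_Ico hTa.ne ▸ closure_minimal (fun s hs => ⟨hs.1, hbefore j s hs⟩)
      (isClosed_Ici.isClosed_le (hcont j) continuousOn_const)
  have hatT : ∀ j, g j T ≤ 0 := fun j => (hle j ⟨haT, le_rfl⟩).2
  have hzero : g i T = 0 := le_antisymm (hatT i) hi
  refine (hcross i T hTa hzero hatT).not_ge ((hg i T haT).nonneg_of_isMaxOn_Icc hTa ?_)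
  exact fun s hs => hzero ▸ (hle i hs).2

theorem inner_alignment_friction_le {ι E : Type*} [Fintype ι] [NormedAddCommGroup E]
    [InnerProductSpace ℝ E] {w : ι → E} {i : ι} {a : ι → ℝ} {α c r : ℝ}
    (ha : ∀ j, 0 ≤ a j) (ha_sum : ∑ j, a j = 1) (hα : 0 ≤ α) (hmax : ∀ j, ‖w j‖ ≤ ‖w i‖) :
    ⟪w i, α • ((∑ j, a j • w j) - w i) - (c * ‖w i‖ ^ r) • w i⟫ ≤
      -(c * ‖w i‖ ^ r * ‖w i‖ ^ 2) := by
  have hmean : ‖∑ j, a j • w j‖ ≤ ‖w i‖ := by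
    simpa using (convex_closedBall (0 : E) ‖w i‖).sum_mem (fun j _ => ha j) ha_sum
      (fun j _ => by simpa using hmax j)
  have hdot : ⟪w i, ∑ j, a j • w j⟫ ≤ ‖w i‖ ^ 2 :=
    calc ⟪w i, ∑ j, a j • w j⟫ ≤ ‖w i‖ * ‖∑ j, a j • w j‖ := real_inner_le_norm _ _
      _ ≤ ‖w i‖ ^ 2 := by nlinarith [norm_nonneg (w i)]
  rw [inner_sub_right, real_inner_smul_right, real_inner_smul_right, inner_sub_right,
    real_inner_self_eq_norm_sq]
  nlinarith

noncomputable def barrier (A β t : ℝ) : ℝ := A * (1 + t) ^ (-β)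

theorem barrier_pos {A β t : ℝ} (hA : 0 < A) (ht : 0 ≤ t) : 0 < barrier A β t := by
  have : 0 < 1 + t := by linarith
  unfold barrier
  positivity

theorem barrier_zero (A β : ℝ) : barrier A β 0 = A := by
  simp [barrier]

theorem hasDerivAt_barrier (A β : ℝ) {t : ℝ} (ht : 0 < 1 + t) :
    HasDerivAt (barrier A β) (-(β / (1 + t)) * barrier A β t) t := by
  have h := (((hasDerivAt_id t).const_add 1).rpow_const (p := -β) (Or.inl ht.ne')).const_mul A
  refine h.congr_deriv ?_
  simp only [barrier, id_eq, Real.rpow_sub_one ht.ne']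
  ring

theorem tendsto_barrier_atTop (A : ℝ) {β : ℝ} (hβ : 0 < β) :
    Tendsto (barrier A β) atTop (𝓝 0) := by
  show Tendsto (fun t => A * (1 + t) ^ (-β)) atTop (𝓝 0)
  simpa using ((tendsto_rpow_neg_atTop hβ).comp
    (tendsto_atTop_add_const_left _ 1 tendsto_id)).const_mul A

/-- `β / (1 + t)` is the relative decay rate of the barrier, `c * barrier A β t ^ r` that of
friction at speed `barrier A β t`. -/
theorem div_one_add_lt_mul_barrier_rpow {A β c r t : ℝ} (hA : 0 < A) (ht : 0 ≤ t)
    (hβ : 0 ≤ β) (hβr : β * r ≤ 1) (hβc : β < c * A ^ r) :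
    β / (1 + t) < c * barrier A β t ^ r := by
  have ht1 : 1 ≤ 1 + t := by linarith
  have hpow : (1 + t)⁻¹ ≤ (1 + t) ^ (-β * r) := by
    rw [← Real.rpow_neg_one]
    exact Real.rpow_le_rpow_of_exponent_le ht1 (by linarith)
  rw [barrier, Real.mul_rpow hA.le (by positivity), ← Real.rpow_mul (by linarith),
    div_eq_mul_inv]
  calc β * (1 + t)⁻¹ < c * A ^ r * (1 + t)⁻¹ := by gcongr
    _ ≤ c * A ^ r * (1 + t) ^ (-β * r) := by gcongr; linarith
    _ = c * (A ^ r * (1 + t) ^ (-β * r)) := by ring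

theorem norm_lt_barrier_of_alignment_friction {ι E : Type*} [Fintype ι] [NormedAddCommGroup E]
    [InnerProductSpace ℝ E] {v : ι → ℝ → E} {a : ι → ι → ℝ → ℝ} {α : ι → ℝ → ℝ} {c : ι → ℝ}
    {r A β : ℝ}
    (ha_nonneg : ∀ i j, ∀ t ∈ Ici (0:ℝ), 0 ≤ a i j t)
    (ha_sum : ∀ i, ∀ t ∈ Ici (0:ℝ), ∑ j, a i j t = 1)
    (hα_nonneg : ∀ i, ∀ t ∈ Ici (0:ℝ), 0 ≤ α i t)
    (hv : ∀ i, ∀ t ∈ Ici (0:ℝ), HasDerivWithinAt (v i)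
      (α i t • ((∑ j, a i j t • v j t) - v i t) - (c i * ‖v i t‖ ^ r) • v i t) (Ici 0) t)
    (hA : 0 < A) (hv0 : ∀ i, ‖v i 0‖ < A) (hβ : 0 ≤ β) (hβr : β * r ≤ 1)
    (hβc : ∀ i, β < c i * A ^ r) :
    ∀ i, ∀ t ∈ Ici (0:ℝ), ‖v i t‖ < barrier A β t := by
  set u := barrier A β
  have hu' : ∀ t ∈ Ici (0:ℝ), HasDerivAt u (-(β / (1 + t)) * u t) t := fun t ht =>
    hasDerivAt_barrier A β (by linarith [mem_Ici.1 ht])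
  have hsq := forall_neg_of_deriv_neg_at_first_zero (g := fun i t => ‖v i t‖ ^ 2 - u t ^ 2)
    (fun i t ht => (hv i t ht).norm_sq.sub ((hu' t ht).hasDerivWithinAt.pow 2)) ?_ ?_
  · intro i t ht
    exact (pow_lt_pow_iff_left₀ (norm_nonneg _) (barrier_pos hA ht).le two_ne_zero).1
      (by linarith [hsq i t ht])
  · intro i
    have hv0i := hv0 i
    simp only [u, barrier_zero, sub_neg]
    nlinarith [norm_nonneg (v i 0)]
  · intro i T hT hzero hle
    have huT : 0 < u T := barrier_pos hA hT.le
    have hnorm : ‖v i T‖ = u T := (sq_eq_sq₀ (norm_nonneg _) huT.le).1 (by linarith)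
    have hmax : ∀ j, ‖v j T‖ ≤ ‖v i T‖ := fun j => hnorm ▸
      (pow_le_pow_iff_left₀ (norm_nonneg _) huT.le two_ne_zero).1 (by linarith [hle j])
    have hdiss := inner_alignment_friction_le (w := fun j => v j T) (a := fun j => a i j T)
      (c := c i) (r := r) (fun j => ha_nonneg i j T hT.le) (ha_sum i T hT.le)
      (hα_nonneg i T hT.le) hmax
    have hrate : β / (1 + T) < c i * u T ^ r :=
      div_one_add_lt_mul_barrier_rpow hA hT.le hβ hβr (hβc i)
    rw [hnorm] at hdiss ⊢
    nlinarith [mul_lt_mul_of_pos_right hrate (pow_pos huT 2)]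

theorem friction_forces_velocities_to_zero_general
    (N d : ℕ)
    (v : Fin N → ℝ → EuclideanSpace ℝ (Fin d))
    (a : Fin N → Fin N → ℝ → ℝ) (α : Fin N → ℝ → ℝ)
    (c : Fin N → ℝ) (r : ℝ) (hc : ∀ i, 0 < c i)
    (ha_nonneg : ∀ i j, ∀ t ∈ Ici (0:ℝ), 0 ≤ a i j t)
    (ha_sum : ∀ i, ∀ t ∈ Ici (0:ℝ), ∑ j, a i j t = 1)
    (hα_nonneg : ∀ i, ∀ t ∈ Ici (0:ℝ), 0 ≤ α i t)
    (hv : ∀ i, ∀ t ∈ Ici (0:ℝ),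
      HasDerivWithinAt (v i)
        (α i t • ((∑ j, a i j t • v j t) - v i t) - (c i * ‖v i t‖ ^ r) • v i t) (Ici 0) t) :
    ∀ i, Tendsto (fun t => v i t) atTop (nhds 0) := by
  obtain ⟨A, hA, hv0⟩ : ∃ A, 0 < A ∧ ∀ i, ‖v i 0‖ < A :=
    ((eventually_gt_atTop 0).and (eventually_all.2 fun i => eventually_gt_atTop _)).exists
  obtain ⟨β, hβ, hβr, hβc⟩ : ∃ β, 0 < β ∧ β * r < 1 ∧ ∀ i, β < c i * A ^ r := by
    have hβr : ∀ᶠ β in 𝓝 (0:ℝ), β * r < 1 :=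
      (continuous_id.mul continuous_const).continuousAt.eventually_lt continuousAt_const
        (by simp)
    have hβc : ∀ᶠ β in 𝓝 (0:ℝ), ∀ i, β < c i * A ^ r :=
      eventually_all.2 fun i => eventually_lt_nhds (by have := hc i; positivity)
    exact (eventually_mem_nhdsWithin.and
      (eventually_nhdsWithin_of_eventually_nhds (hβr.and hβc)) : ∀ᶠ β in 𝓝[>] (0:ℝ), _).exists
  have hbound := norm_lt_barrier_of_alignment_friction ha_nonneg ha_sum hα_nonneg hv hA hv0
    hβ.le hβr.le hβc
  intro i
  refine squeeze_zero_norm' ?_ (tendsto_barrier_atTop A hβ)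
  filter_upwards [eventually_ge_atTop 0] with t ht
  exact (hbound i t ht).le

/-- For a `C¹` solution of the flocking system with friction
`v_i' = α_i(t)(v̄_i - v_i) - c_i ‖v_i‖^r v_i` (with `c_i > 0`, `r ≥ 0`), each velocity tends
to zero as `t → ∞`. -/
theorem friction_forces_velocities_to_zero
    (N d : ℕ) (hN : 1 ≤ N)
    (x v : Fin N → ℝ → EuclideanSpace ℝ (Fin d))
    (a : Fin N → Fin N → ℝ → ℝ) (α : Fin N → ℝ → ℝ)
    (c : Fin N → ℝ) (r : ℝ) (hr : 0 ≤ r) (hc : ∀ i, 0 < c i)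
    (ha_cont : ∀ i j, ContinuousOn (a i j) (Ici 0))
    (ha_nonneg : ∀ i j, ∀ t ∈ Ici (0:ℝ), 0 ≤ a i j t)
    (ha_sum : ∀ i, ∀ t ∈ Ici (0:ℝ), ∑ j, a i j t = 1)
    (hα_cont : ∀ i, ContinuousOn (α i) (Ici 0))
    (hα_nonneg : ∀ i, ∀ t ∈ Ici (0:ℝ), 0 ≤ α i t)
    (hx : ∀ i, ∀ t ∈ Ici (0:ℝ), HasDerivWithinAt (x i) (v i t) (Ici 0) t)
    (hv : ∀ i, ∀ t ∈ Ici (0:ℝ),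
      HasDerivWithinAt (v i)
        (α i t • ((∑ j, a i j t • v j t) - v i t) - (c i * ‖v i t‖ ^ r) • v i t) (Ici 0) t) :
    ∀ i, Tendsto (fun t => v i t) atTop (nhds 0) :=
  friction_forces_velocities_to_zero_general N d v a α c r hc ha_nonneg ha_sum hα_nonneg hv
end

section
/- Let (x_i, v_i)_{i=1}^N be a C¹ solution on [0,∞) of the flocking system with friction, with friction exponent r > 0, and define the energy E(t) = max_{1≤j≤N} (1/2)‖v_j(t)‖² and c̲ = min_i c_i. If E(0) > 0, then for all t ≥ 0: E(t) ≤ ( E(0)^{−r/2} + 2^{r/2} r c̲ t )^{−2/r}. -/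
/-!
At an agent of maximal speed the alignment term `α (v̄ - v)` does not increase `½‖v‖²`, since
`v̄` is a convex combination of vectors no longer than `v`; only friction acts, so
`(½‖v_j‖²)' ≤ -c̲ ‖v_j‖^(r+2) = -2^(r/2+1) c̲ E^(r/2+1)`. Hence the right lower Dini derivative
of the maximum `E` satisfies `D⁺E ≤ -k E^(p+1)` with `p = r/2`, `k = 2^(r/2+1) c̲`, and a fencing
argument compares `E` with the explicit solution `(E(0)^(-p) + p k t)^(-1/p)` of `y' = -k y^(p+1)`.
-/

open Set Filter Topology
open scoped InnerProductSpace

theorem ciSup_eq_of_forall_le {ι α : Type*} [Nonempty ι] [ConditionallyCompleteLattice α]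
    {f : ι → α} {i : ι} (h : ∀ k, f k ≤ f i) : ⨆ k, f k = f i :=
  le_antisymm (ciSup_le h) (le_ciSup ⟨f i, forall_mem_range.2 h⟩ i)

theorem ContinuousOn.ciSup_fintype {α β ι : Type*} [TopologicalSpace α]
    [ConditionallyCompleteLinearOrder β] [TopologicalSpace β] [OrderTopology β]
    [Fintype ι] [Nonempty ι] {f : ι → α → β} {s : Set α} (hf : ∀ i, ContinuousOn (f i) s) :
    ContinuousOn (fun x => ⨆ i, f i x) s := by
  simpa only [Finset.sup'_univ_eq_ciSup] using
    ContinuousOn.finset_sup'_apply Finset.univ_nonempty fun i _ => hf i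

theorem rpow_mul_sq_eq_two_rpow_mul_half_sq_rpow {r t : ℝ} (hr : 0 ≤ r) (ht : 0 ≤ t) :
    t ^ r * t ^ 2 = 2 ^ (r / 2 + 1) * (1 / 2 * t ^ 2) ^ (r / 2 + 1) := by
  rw [← Real.mul_rpow zero_le_two (by positivity), ← mul_assoc, mul_one_div_cancel two_ne_zero,
    one_mul, ← Real.rpow_natCast, ← Real.rpow_mul ht, ← Real.rpow_add' ht (by positivity),
    Nat.cast_ofNat]
  ring_nf

section InnerProduct

variable {E ι : Type*} [NormedAddCommGroup E] [InnerProductSpace ℝ E]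

theorem real_inner_sum_smul_sub_self_nonpos {s : Finset ι} {w : ι → ℝ} {v : ι → E} {y : E}
    (hw₀ : ∀ i ∈ s, 0 ≤ w i) (hw₁ : ∑ i ∈ s, w i = 1) (hv : ∀ i ∈ s, ‖v i‖ ≤ ‖y‖) :
    ⟪∑ i ∈ s, w i • v i - y, y⟫_ℝ ≤ 0 := by
  have hmem : ∑ i ∈ s, w i • v i ∈ Metric.closedBall (0 : E) ‖y‖ :=
    (convex_closedBall 0 ‖y‖).sum_mem hw₀ hw₁ fun i hi => mem_closedBall_zero_iff.2 (hv i hi)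
  rw [inner_sub_left, real_inner_self_eq_norm_sq, sub_nonpos]
  calc ⟪∑ i ∈ s, w i • v i, y⟫_ℝ ≤ ‖∑ i ∈ s, w i • v i‖ * ‖y‖ := real_inner_le_norm _ _
    _ ≤ ‖y‖ * ‖y‖ := by gcongr; exact mem_closedBall_zero_iff.1 hmem
    _ = ‖y‖ ^ 2 := (sq _).symm

theorem real_inner_alignment_sub_friction_le [Fintype ι] {w : ι → ℝ} {v : ι → E} {j : ι}
    (hw₀ : ∀ i, 0 ≤ w i) (hw₁ : ∑ i, w i = 1) (hv : ∀ i, ‖v i‖ ≤ ‖v j‖) {β γ r : ℝ}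
    (hβ : 0 ≤ β) :
    ⟪β • (∑ i, w i • v i - v j) - (γ * ‖v j‖ ^ r) • v j, v j⟫_ℝ ≤
      -γ * (‖v j‖ ^ r * ‖v j‖ ^ 2) := by
  have halign := mul_nonpos_of_nonneg_of_nonpos hβ
    (real_inner_sum_smul_sub_self_nonpos (fun i _ => hw₀ i) hw₁ fun i _ => hv i)
  rw [inner_sub_left, real_inner_smul_left, real_inner_smul_left, real_inner_self_eq_norm_sq]
  linarith

theorem real_inner_alignment_sub_friction_le_energy_rpow [Fintype ι] {w : ι → ℝ} {v : ι → E}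
    {j : ι} (hw₀ : ∀ i, 0 ≤ w i) (hw₁ : ∑ i, w i = 1) (hv : ∀ i, ‖v i‖ ≤ ‖v j‖)
    {β γ γ₀ r : ℝ} (hβ : 0 ≤ β) (hγ : γ₀ ≤ γ) (hr : 0 ≤ r) :
    ⟪β • (∑ i, w i • v i - v j) - (γ * ‖v j‖ ^ r) • v j, v j⟫_ℝ ≤
      -(2 ^ (r / 2 + 1) * γ₀) * (1 / 2 * ‖v j‖ ^ 2) ^ (r / 2 + 1) :=
  calc _ ≤ -γ * (‖v j‖ ^ r * ‖v j‖ ^ 2) := real_inner_alignment_sub_friction_le hw₀ hw₁ hv hβ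
    _ ≤ -γ₀ * (‖v j‖ ^ r * ‖v j‖ ^ 2) := by gcongr
    _ = _ := by rw [rpow_mul_sq_eq_two_rpow_mul_half_sq_rpow hr (norm_nonneg _)]; ring

end InnerProduct

theorem frequently_slope_iSup_lt {ι : Type*} [Finite ι] [Nonempty ι] {e : ι → ℝ → ℝ}
    {e' : ι → ℝ} {x z : ℝ} (he : ∀ i, HasDerivWithinAt (e i) (e' i) (Ioi x) x)
    (hz : ∀ i, (∀ k, e k x ≤ e i x) → e' i < z) :
    ∃ᶠ y in 𝓝[>] x, slope (fun y => ⨆ i, e i y) x y < z := by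
  obtain ⟨i, hi⟩ : ∃ i, ∃ᶠ y in 𝓝[>] x, ∀ k, e k y ≤ e i y :=
    frequently_exists.1 (Frequently.of_forall fun y => Finite.exists_max (e · y))
  have hix : ∀ k, e k x ≤ e i x := fun k =>
    (isClosed_le continuous_fst continuous_snd).mem_of_frequently_of_tendsto
      (hi.mono fun y hy => hy k)
      ((he k).continuousWithinAt.tendsto.prodMk_nhds (he i).continuousWithinAt.tendsto)
  have hslope : ∀ᶠ y in 𝓝[>] x, slope (e i) x y < z :=
    ((hasDerivWithinAt_iff_tendsto_slope' (lt_irrefl x)).1 (he i)).eventually_lt_const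
      (hz i hix)
  refine (hi.and_eventually hslope).mono fun y ⟨hy, hlt⟩ => ?_
  rwa [slope_def_field, ciSup_eq_of_forall_le hy, ciSup_eq_of_forall_le hix, ← slope_def_field]

/-- The solution of `y' = -k y ^ (p + 1)` with `y 0 = A ^ (-p⁻¹)`. -/
noncomputable def powerDecay (A p k t : ℝ) : ℝ := (A + p * k * t) ^ (-p⁻¹)

theorem powerDecay_zero {A p k : ℝ} (hA : 0 ≤ A) (hp : p ≠ 0) :
    powerDecay (A ^ (-p)) p k 0 = A := by
  rw [powerDecay, mul_zero, add_zero, ← Real.rpow_mul hA, neg_mul_neg, mul_inv_cancel₀ hp,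
    Real.rpow_one]

theorem hasDerivAt_powerDecay {A p k t : ℝ} (hp : p ≠ 0) (h : 0 < A + p * k * t) :
    HasDerivAt (powerDecay A p k) (-k * powerDecay A p k t ^ (p + 1)) t := by
  have hlin : HasDerivAt (fun s => A + p * k * s) (p * k) t := by
    simpa using ((hasDerivAt_id t).const_mul (p * k)).const_add A
  refine (hlin.rpow_const (p := -p⁻¹) (Or.inl h.ne')).congr_deriv ?_
  rw [powerDecay, ← Real.rpow_mul h.le, show -p⁻¹ * (p + 1) = -p⁻¹ - 1 by field_simp; ring]
  field_simp

theorem le_powerDecay_of_frequently_slope_lt {E : ℝ → ℝ} {p k t : ℝ} (hp : 0 < p)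
    (hk : 0 ≤ k) (hE0 : 0 < E 0) (hE : ContinuousOn E (Ici 0))
    (hslope : ∀ x, 0 ≤ x → ∀ z, -k * E x ^ (p + 1) < z → ∃ᶠ y in 𝓝[>] x, slope E x y < z)
    (ht : 0 ≤ t) : E t ≤ powerDecay (E 0 ^ (-p)) p k t := by
  set P := powerDecay (E 0 ^ (-p)) p k
  have hpos : ∀ s, 0 ≤ s → 0 < E 0 ^ (-p) + p * k * s := fun s hs =>
    add_pos_of_pos_of_nonneg (Real.rpow_pos_of_pos hE0 _) (by positivity)
  have hP : ∀ s, 0 ≤ s → HasDerivAt P (-k * P s ^ (p + 1)) s := fun s hs =>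
    hasDerivAt_powerDecay hp.ne' (hpos s hs)
  -- `P + ε (1 + ·)` is a strict supersolution, since `y ↦ -k y ^ (p + 1)` is nonincreasing.
  refine le_of_forall_pos_le_add fun δ hδ => ?_
  set ε := δ / (1 + t)
  have hε : 0 < ε := by positivity
  have hB : ∀ s, 0 ≤ s →
      HasDerivAt (fun s => P s + ε * (1 + s)) (-k * P s ^ (p + 1) + ε) s := fun s hs =>
    ((hP s hs).add (((hasDerivAt_id' s).const_add 1).const_mul ε)).congr_deriv (by ring)
  have hcontact : ∀ s ∈ Ico 0 t, E s = P s + ε * (1 + s) →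
      -k * E s ^ (p + 1) < -k * P s ^ (p + 1) + ε := fun s hs hEs => by
    have hPE : P s ^ (p + 1) ≤ E s ^ (p + 1) :=
      Real.rpow_le_rpow (Real.rpow_nonneg (hpos s hs.1).le _)
        (hEs ▸ le_add_of_nonneg_right (mul_nonneg hε.le (by linarith [hs.1]))) (by positivity)
    linarith [mul_le_mul_of_nonneg_left hPE hk]
  have hcompare := image_le_of_liminf_slope_right_lt_deriv_boundary'
    (hE.mono Icc_subset_Ici_self) (fun x hx => hslope x hx.1)
    (by simp [P, powerDecay_zero hE0.le hp.ne', hε.le])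
    (fun s hs => (hB s hs.1).continuousAt.continuousWithinAt)
    (fun s hs => (hB s hs.1).hasDerivWithinAt) hcontact (right_mem_Icc.2 ht)
  calc E t ≤ P t + ε * (1 + t) := hcompare
    _ = P t + δ := by rw [div_mul_cancel₀ δ (by positivity)]

theorem friction_energy_decay_estimate_general
    (N d : ℕ) (hN : 1 ≤ N)
    (v : Fin N → ℝ → EuclideanSpace ℝ (Fin d))
    (a : Fin N → Fin N → ℝ → ℝ) (α : Fin N → ℝ → ℝ)
    (c : Fin N → ℝ) (r : ℝ) (hr : 0 < r) (hc : ∀ i, 0 < c i)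
    (ha_nonneg : ∀ i j, ∀ t ∈ Ici (0:ℝ), 0 ≤ a i j t)
    (ha_sum : ∀ i, ∀ t ∈ Ici (0:ℝ), ∑ j, a i j t = 1)
    (hα_nonneg : ∀ i, ∀ t ∈ Ici (0:ℝ), 0 ≤ α i t)
    (hv : ∀ i, ∀ t ∈ Ici (0:ℝ),
      HasDerivWithinAt (v i)
        (α i t • ((∑ j, a i j t • v j t) - v i t) - (c i * ‖v i t‖ ^ r) • v i t) (Ici 0) t)
    (hE0 : 0 < ⨆ j, (1 / 2) * ‖v j 0‖ ^ 2) :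
    ∀ t ∈ Ici (0:ℝ),
      (⨆ j, (1 / 2) * ‖v j t‖ ^ 2) ≤
        ((⨆ j, (1 / 2) * ‖v j 0‖ ^ 2) ^ (-(r / 2)) +
            (2:ℝ) ^ (r / 2) * r * (⨅ i, c i) * t) ^ (-(2 / r)) := by
  intro t ht
  have : Nonempty (Fin N) := ⟨⟨0, hN⟩⟩
  set F := fun j s => α j s • ((∑ k, a j k s • v k s) - v j s) - (c j * ‖v j s‖ ^ r) • v j s
  set e := fun j s => 1 / 2 * ‖v j s‖ ^ 2
  set k := 2 ^ (r / 2 + 1) * ⨅ i, c i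
  have he : ∀ j, ∀ s ∈ Ici (0:ℝ), HasDerivWithinAt (e j) ⟪F j s, v j s⟫_ℝ (Ici 0) s :=
    fun j s hs => ((hv j s hs).norm_sq.const_mul (1 / 2 : ℝ)).congr_deriv
      (by rw [real_inner_comm]; ring)
  have he_max : ∀ j, ∀ s ∈ Ici (0:ℝ), (∀ i, e i s ≤ e j s) →
      ⟪F j s, v j s⟫_ℝ ≤ -k * e j s ^ (r / 2 + 1) := fun j s hs hj =>
    real_inner_alignment_sub_friction_le_energy_rpow (fun i => ha_nonneg j i s hs)
      (ha_sum j s hs)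
      (fun i => (pow_le_pow_iff_left₀ (norm_nonneg _) (norm_nonneg _) two_ne_zero).1
        ((mul_le_mul_iff_of_pos_left one_half_pos).1 (hj i)))
      (hα_nonneg j s hs) (ciInf_le (finite_range c).bddBelow j) hr.le
  have hslope : ∀ s, 0 ≤ s → ∀ z, -k * (⨆ j, e j s) ^ (r / 2 + 1) < z →
      ∃ᶠ y in 𝓝[>] s, slope (fun y => ⨆ j, e j y) s y < z := fun s hs z hz =>
    frequently_slope_iSup_lt (fun j => (he j s hs).mono (Ioi_subset_Ici hs)) fun j hj =>
      (he_max j s hs hj).trans_lt (by rwa [ciSup_eq_of_forall_le hj] at hz)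
  have hk : 0 ≤ k := mul_nonneg (by positivity) (le_ciInf fun i => (hc i).le)
  convert le_powerDecay_of_frequently_slope_lt (half_pos hr) hk hE0
    (ContinuousOn.ciSup_fintype fun j s hs => (he j s hs).continuousWithinAt) hslope ht using 2
  simp only [powerDecay, e, k, inv_div, Real.rpow_add_one two_ne_zero]
  congr 2
  ring

/-- For a `C¹` solution of the flocking system with friction (friction
exponent `r > 0`), the energy `E(t) = max_j ½‖v_j(t)‖²` satisfies, when `E(0) > 0`, the decay
estimate `E(t) ≤ (E(0)^{-r/2} + 2^{r/2} r c̲ t)^{-2/r}` for all `t ≥ 0`, where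
`c̲ = min_i c_i`. -/
theorem friction_energy_decay_estimate
    (N d : ℕ) (hN : 1 ≤ N)
    (x v : Fin N → ℝ → EuclideanSpace ℝ (Fin d))
    (a : Fin N → Fin N → ℝ → ℝ) (α : Fin N → ℝ → ℝ)
    (c : Fin N → ℝ) (r : ℝ) (hr : 0 < r) (hc : ∀ i, 0 < c i)
    (ha_cont : ∀ i j, ContinuousOn (a i j) (Ici 0))
    (ha_nonneg : ∀ i j, ∀ t ∈ Ici (0:ℝ), 0 ≤ a i j t)
    (ha_sum : ∀ i, ∀ t ∈ Ici (0:ℝ), ∑ j, a i j t = 1)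
    (hα_cont : ∀ i, ContinuousOn (α i) (Ici 0))
    (hα_nonneg : ∀ i, ∀ t ∈ Ici (0:ℝ), 0 ≤ α i t)
    (hx : ∀ i, ∀ t ∈ Ici (0:ℝ), HasDerivWithinAt (x i) (v i t) (Ici 0) t)
    (hv : ∀ i, ∀ t ∈ Ici (0:ℝ),
      HasDerivWithinAt (v i)
        (α i t • ((∑ j, a i j t • v j t) - v i t) - (c i * ‖v i t‖ ^ r) • v i t) (Ici 0) t)
    (hE0 : 0 < ⨆ j, (1 / 2) * ‖v j 0‖ ^ 2) :
    ∀ t ∈ Ici (0:ℝ),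
      (⨆ j, (1 / 2) * ‖v j t‖ ^ 2) ≤
        ((⨆ j, (1 / 2) * ‖v j 0‖ ^ 2) ^ (-(r / 2)) +
            (2:ℝ) ^ (r / 2) * r * (⨅ i, c i) * t) ^ (-(2 / r)) :=
  friction_energy_decay_estimate_general N d hN v a α c r hr hc ha_nonneg ha_sum hα_nonneg hv hE0
end

section
/- Let S be an N×N real antisymmetric matrix (S_{ij} = −S_{ji}) with |S_{ij}| ≤ M for all i,j. Let u, w ∈ ℝ^N have nonnegative entries, with sums Ū = Σ_i u_i and W̄ = Σ_j w_j. Fix θ > 0 and let λ(θ) be the cardinality of the set Λ(θ) = { j : u_j ≥ θ Ū and w_j ≥ θ W̄ }. Then |⟨S u, w⟩| ≤ M Ū W̄ (1 − λ(θ)² θ²). -/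
/-- Motsch–Tadmor maximal action lemma. For an antisymmetric `N×N` matrix
`S` with `|S_{ij}| ≤ M`, vectors `u, w` with nonnegative entries and sums `Ū, W̄`, and
`λ(θ)` the number of indices `j` with `u_j ≥ θ Ū` and `w_j ≥ θ W̄`, one has
`|⟨Su, w⟩| ≤ M Ū W̄ (1 - λ(θ)² θ²)`. -/
theorem antisymmetric_active_set_bound
    (N : ℕ) (S : Fin N → Fin N → ℝ) (M θ : ℝ) (hθ : 0 < θ)
    (hanti : ∀ i j, S i j = - S j i) (hbound : ∀ i j, |S i j| ≤ M)
    (u w : Fin N → ℝ) (hu : ∀ i, 0 ≤ u i) (hw : ∀ i, 0 ≤ w i) :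
    |∑ i, ∑ j, S i j * u j * w i| ≤
      M * (∑ i, u i) * (∑ j, w j) *
        (1 - ((Finset.univ.filter
                (fun j => θ * (∑ i, u i) ≤ u j ∧ θ * (∑ i, w i) ≤ w j)).card : ℝ) ^ 2
              * θ ^ 2) := by
  classical
  rcases Nat.eq_zero_or_pos N with h0 | hN
  · subst h0; simp
  set U := ∑ i, u i with hU
  set W := ∑ i, w i with hW
  set Λ := Finset.univ.filter (fun j : Fin N => θ * U ≤ u j ∧ θ * W ≤ w j) with hΛ
  have hUnn : 0 ≤ U := Finset.sum_nonneg fun i _ => hu i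
  have hWnn : 0 ≤ W := Finset.sum_nonneg fun i _ => hw i
  clear_value U W Λ
  have hM : 0 ≤ M := le_trans (abs_nonneg _) (hbound ⟨0, hN⟩ ⟨0, hN⟩)
  -- antisymmetrization
  have hBA : ∑ i, ∑ j, S i j * u j * w i = - ∑ i, ∑ j, S i j * (u i * w j) := by
    rw [Finset.sum_comm, ← Finset.sum_neg_distrib]
    refine Finset.sum_congr rfl fun j _ => ?_
    rw [← Finset.sum_neg_distrib]
    refine Finset.sum_congr rfl fun i _ => ?_
    rw [hanti i j]; ring
  have key : ∑ i, ∑ j, S i j * u j * w i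
      = (1/2) * ∑ i, ∑ j, S i j * (u j * w i - u i * w j) := by
    have : ∑ i, ∑ j, S i j * (u j * w i - u i * w j)
        = (∑ i, ∑ j, S i j * u j * w i) - (∑ i, ∑ j, S i j * (u i * w j)) := by
      rw [← Finset.sum_sub_distrib]
      refine Finset.sum_congr rfl fun i _ => ?_
      rw [← Finset.sum_sub_distrib]
      exact Finset.sum_congr rfl fun j _ => by ring
    rw [this]; linarith [hBA]
  -- pointwise bound
  have pt : ∀ i j, |S i j * (u j * w i - u i * w j)|
      ≤ M * (u j * w i + u i * w j)
        - (if i ∈ Λ then (1:ℝ) else 0) * (if j ∈ Λ then (1:ℝ) else 0)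
            * (2 * M * (θ^2 * U * W)) := by
    intro i j
    have h1 : |S i j * (u j * w i - u i * w j)| ≤ M * |u j * w i - u i * w j| := by
      rw [abs_mul]
      exact mul_le_mul_of_nonneg_right (hbound i j) (abs_nonneg _)
    by_cases hi : i ∈ Λ
    · by_cases hj : j ∈ Λ
      · simp only [hi, hj, if_pos, one_mul]
        have hi' := hi; have hj' := hj
        rw [hΛ] at hi' hj'
        have hiu : θ * U ≤ u i := (Finset.mem_filter.mp hi').2.1
        have hiw : θ * W ≤ w i := (Finset.mem_filter.mp hi').2.2
        have hju : θ * U ≤ u j := (Finset.mem_filter.mp hj').2.1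
        have hjw : θ * W ≤ w j := (Finset.mem_filter.mp hj').2.2
        have hθU : 0 ≤ θ * U := mul_nonneg hθ.le hUnn
        have hθW : 0 ≤ θ * W := mul_nonneg hθ.le hWnn
        have h2 : θ^2 * U * W ≤ u j * w i := by
          calc θ^2 * U * W = (θ * U) * (θ * W) := by ring
          _ ≤ u j * w i := mul_le_mul hju hiw hθW (le_trans hθU hju)
        have h3 : θ^2 * U * W ≤ u i * w j := by
          calc θ^2 * U * W = (θ * U) * (θ * W) := by ring
          _ ≤ u i * w j := mul_le_mul hiu hjw hθW (le_trans hθU hiu)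
        have h4 : |u j * w i - u i * w j| ≤ u j * w i + u i * w j - 2 * (θ^2 * U * W) := by
          rw [abs_le]; constructor <;> nlinarith
        calc |S i j * (u j * w i - u i * w j)| ≤ M * |u j * w i - u i * w j| := h1
          _ ≤ M * (u j * w i + u i * w j - 2 * (θ^2 * U * W)) :=
              mul_le_mul_of_nonneg_left h4 hM
          _ = M * (u j * w i + u i * w j) - 2 * M * (θ^2 * U * W) := by ring
      · simp only [hj, if_neg, not_false_iff, mul_zero, zero_mul, sub_zero]
        refine h1.trans (mul_le_mul_of_nonneg_left ?_ hM)
        refine (abs_sub _ _).trans ?_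
        rw [abs_of_nonneg (mul_nonneg (hu j) (hw i)),
            abs_of_nonneg (mul_nonneg (hu i) (hw j))]
    · simp only [hi, if_neg, not_false_iff, zero_mul, sub_zero]
      refine h1.trans (mul_le_mul_of_nonneg_left ?_ hM)
      refine (abs_sub _ _).trans ?_
      rw [abs_of_nonneg (mul_nonneg (hu j) (hw i)),
          abs_of_nonneg (mul_nonneg (hu i) (hw j))]
  -- summing
  have hcard : ∑ i, (if i ∈ Λ then (1:ℝ) else 0) = (Λ.card : ℝ) := by simp
  have sumuw : ∑ i, ∑ j, (u j * w i + u i * w j) = 2 * U * W := by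
    have e1 : ∑ i, ∑ j, u j * w i = U * W := by
      rw [hU, hW, Finset.sum_mul_sum, Finset.sum_comm]
    have e2 : ∑ i, ∑ j, u i * w j = U * W := by
      rw [hU, hW, Finset.sum_mul_sum]
    calc ∑ i, ∑ j, (u j * w i + u i * w j)
        = (∑ i, ∑ j, u j * w i) + ∑ i, ∑ j, u i * w j := by
          rw [← Finset.sum_add_distrib]
          exact Finset.sum_congr rfl fun i _ => by rw [← Finset.sum_add_distrib]
      _ = 2 * U * W := by rw [e1, e2]; ring
  have sumind : ∑ i, ∑ j, (if i ∈ Λ then (1:ℝ) else 0) * (if j ∈ Λ then (1:ℝ) else 0)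
        * (2 * M * (θ^2 * U * W))
      = (Λ.card : ℝ)^2 * (2 * M * (θ^2 * U * W)) := by
    have base : ((Λ.card : ℝ)) * ((Λ.card : ℝ))
        = ∑ i, ∑ j, (if i ∈ Λ then (1:ℝ) else 0) * (if j ∈ Λ then (1:ℝ) else 0) := by
      rw [← hcard, Finset.sum_mul_sum]
    rw [show ((Λ.card : ℝ))^2 * (2 * M * (θ^2 * U * W))
          = ((Λ.card : ℝ) * (Λ.card : ℝ)) * (2 * M * (θ^2 * U * W)) from by ring,
        base, Finset.sum_mul]
    refine Finset.sum_congr rfl fun i _ => ?_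
    rw [Finset.sum_mul]
  have main : |∑ i, ∑ j, S i j * u j * w i|
      ≤ (1/2) * (2 * M * U * W - (Λ.card : ℝ)^2 * (2 * M * (θ^2 * U * W))) := by
    rw [key, abs_mul, abs_of_nonneg (by norm_num : (0:ℝ) ≤ 1/2)]
    refine mul_le_mul_of_nonneg_left ?_ (by norm_num)
    calc |∑ i, ∑ j, S i j * (u j * w i - u i * w j)|
        ≤ ∑ i, |∑ j, S i j * (u j * w i - u i * w j)| := Finset.abs_sum_le_sum_abs _ _
      _ ≤ ∑ i, ∑ j, |S i j * (u j * w i - u i * w j)| :=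
          Finset.sum_le_sum fun i _ => Finset.abs_sum_le_sum_abs _ _
      _ ≤ ∑ i, ∑ j, (M * (u j * w i + u i * w j)
            - (if i ∈ Λ then (1:ℝ) else 0) * (if j ∈ Λ then (1:ℝ) else 0)
                * (2 * M * (θ^2 * U * W))) :=
          Finset.sum_le_sum fun i _ => Finset.sum_le_sum fun j _ => pt i j
      _ = 2 * M * U * W - (Λ.card : ℝ)^2 * (2 * M * (θ^2 * U * W)) := by
          rw [show ∀ f g : Fin N → Fin N → ℝ, ∑ i, ∑ j, (f i j - g i j)
                = (∑ i, ∑ j, f i j) - ∑ i, ∑ j, g i j from fun f g => by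
              rw [← Finset.sum_sub_distrib]
              exact Finset.sum_congr rfl fun i _ => by rw [← Finset.sum_sub_distrib]]
          rw [sumind]
          rw [show ∑ i, ∑ j, M * (u j * w i + u i * w j)
                = M * ∑ i, ∑ j, (u j * w i + u i * w j) from by
              rw [Finset.mul_sum]
              exact Finset.sum_congr rfl fun i _ => by rw [Finset.mul_sum]]
          rw [sumuw]; ring
  refine main.trans (le_of_eq ?_)
  ring
end

section
/- Let f_1, …, f_n : [0,T] → ℝ be absolutely continuous and define f(t) = max{ f_i(t) : i = 1,…,n }. Suppose i_* : [0,T] → {1,…,n} satisfies f_{i_*(t)}(t) ≥ f_j(t) for all t ∈ [0,T] and all j. Then f is absolutely continuous, and for almost every t ∈ [0,T] both f and f_{i_*(t)} are differentiable at t with f'(t) = f_{i_*(t)}'(t). -/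
open Set MeasureTheory

/-- A function `f : ℝ → E` is absolutely continuous on `[a,b]`: for every `ε > 0` there is a
`δ > 0` such that for every finite family of non-overlapping subintervals `(sₖ, tₖ)` of
`[a,b]` of total length less than `δ`, the sum `∑ₖ dist (f tₖ) (f sₖ)` is less than `ε`. -/
def AbsContOn {E : Type*} [PseudoMetricSpace E] (f : ℝ → E) (a b : ℝ) : Prop :=
  ∀ ε > 0, ∃ δ > 0, ∀ n : ℕ, ∀ s t : Fin n → ℝ,
    (∀ k, a ≤ s k ∧ s k ≤ t k ∧ t k ≤ b) →
    (Pairwise fun k l => Ioo (s k) (t k) ∩ Ioo (s l) (t l) = ∅) →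
    (∑ k, (t k - s k)) < δ → (∑ k, dist (f (t k)) (f (s k))) < ε

/-- Small-interval variation bound from the absolute continuity modulus. -/
lemma evar_le_one_of_modulus {T : ℝ} {f : ℝ → ℝ} {δ : ℝ}
    (H : ∀ n : ℕ, ∀ s t : Fin n → ℝ,
      (∀ k, 0 ≤ s k ∧ s k ≤ t k ∧ t k ≤ T) →
      (Pairwise fun k l => Ioo (s k) (t k) ∩ Ioo (s l) (t l) = ∅) →
      (∑ k, (t k - s k)) < δ → (∑ k, dist (f (t k)) (f (s k))) < 1)
    {a b : ℝ} (ha : 0 ≤ a) (hb : b ≤ T) (hab : a ≤ b) (hlen : b - a < δ) :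
    eVariationOn f (Icc a b) ≤ 1 := by
  refine iSup_le ?_
  rintro ⟨m, u, hu, hus⟩
  dsimp only
  have hsum : (∑ i ∈ Finset.range m, edist (f (u (i + 1))) (f (u i)))
      = ENNReal.ofReal (∑ i ∈ Finset.range m, dist (f (u (i + 1))) (f (u i))) := by
    rw [ENNReal.ofReal_sum_of_nonneg (fun i _ => dist_nonneg)]
    exact Finset.sum_congr rfl fun i _ => edist_dist _ _
  rw [hsum]
  have hreal : (∑ i ∈ Finset.range m, dist (f (u (i + 1))) (f (u i))) < 1 := by
    rw [Finset.sum_range fun i => dist (f (u (i + 1))) (f (u i))]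
    refine H m (fun k => u k) (fun k => u (k + 1)) ?_ ?_ ?_
    · intro k
      exact ⟨ha.trans (hus k).1, hu (Nat.le_succ _), (hus (k + 1)).2.trans hb⟩
    · intro k l hkl
      rcases hkl.lt_or_gt with h | h
      · apply eq_empty_iff_forall_notMem.2
        rintro x ⟨⟨_, hx2⟩, ⟨hx3, _⟩⟩
        have : u (k.1 + 1) ≤ u l.1 := hu (Nat.succ_le_of_lt h)
        linarith
      · apply eq_empty_iff_forall_notMem.2
        rintro x ⟨⟨hx1, _⟩, ⟨_, hx4⟩⟩
        have : u (l.1 + 1) ≤ u k.1 := hu (Nat.succ_le_of_lt h)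
        linarith
    · have : (∑ k : Fin m, (u (k.1 + 1) - u k.1)) = u m - u 0 := by
        rw [← Finset.sum_range fun i => u (i + 1) - u i]
        exact Finset.sum_range_sub u m
      rw [this]
      have h1 : u m ≤ b := (hus m).2
      have h2 : a ≤ u 0 := (hus 0).1
      linarith
  calc ENNReal.ofReal (∑ i ∈ Finset.range m, dist (f (u (i + 1))) (f (u i)))
      ≤ ENNReal.ofReal 1 := ENNReal.ofReal_le_ofReal hreal.le
    _ = 1 := ENNReal.ofReal_one

lemma boundedVariationOn_of_absContOn {T : ℝ} (hT : 0 ≤ T) {f : ℝ → ℝ}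
    (hf : AbsContOn f 0 T) : BoundedVariationOn f (Icc 0 T) := by
  obtain ⟨δ, hδ, H⟩ := hf 1 one_pos
  set N : ℕ := ⌈T / δ⌉₊ + 1 with hN
  have hNpos : 0 < (N : ℝ) := by positivity
  set c : ℝ := T / N with hc
  have hc0 : 0 ≤ c := div_nonneg hT hNpos.le
  have hNT : (N : ℝ) * c = T := by rw [hc]; field_simp
  have hcδ : c < δ := by
    have h1 : T / δ < (N : ℝ) := (Nat.le_ceil _).trans_lt (by exact_mod_cast Nat.lt_succ_self _)
    have h2 : T < (N : ℝ) * δ := by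
      rw [div_lt_iff₀ hδ] at h1; linarith
    rw [hc, div_lt_iff₀ hNpos]
    nlinarith
  have key : ∀ k : ℕ, k ≤ N → eVariationOn f (Icc 0 (k * c)) ≤ k := by
    intro k
    induction k with
    | zero =>
      intro _
      simp only [Nat.cast_zero, zero_mul]
      have hs : (Icc (0:ℝ) 0).Subsingleton := by
        rw [Icc_self]; exact subsingleton_singleton
      exact (eVariationOn.subsingleton f hs).le
    | succ k ih =>
      intro hkN
      have hk : (k : ℝ) * c ≤ ((k : ℝ) + 1) * c := by nlinarith
      have h0k : (0 : ℝ) ≤ k * c := by positivity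
      have hsplit := eVariationOn.Icc_add_Icc f (s := (univ : Set ℝ)) h0k hk (mem_univ _)
      simp only [univ_inter] at hsplit
      have h1 : eVariationOn f (Icc 0 ((k : ℝ) * c)) ≤ k := ih (Nat.le_of_succ_le hkN)
      have h2 : eVariationOn f (Icc ((k : ℝ) * c) (((k : ℝ) + 1) * c)) ≤ 1 := by
        have hkN' : ((k : ℝ) + 1) ≤ N := by exact_mod_cast hkN
        have hub : ((k : ℝ) + 1) * c ≤ T := by nlinarith
        have hdiff : ((k : ℝ) + 1) * c - (k : ℝ) * c < δ := by nlinarith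
        exact evar_le_one_of_modulus H h0k hub hk hdiff
      have : eVariationOn f (Icc 0 (((k : ℝ) + 1) * c)) ≤ (k : ENNReal) + 1 := by
        rw [← hsplit]; exact add_le_add h1 h2
      push_cast
      exact this
  have hfin := key N le_rfl
  rw [hNT] at hfin
  exact ne_top_of_le_ne_top (by simp) hfin

lemma ae_differentiableAt_of_absContOn {T : ℝ} (hT : 0 ≤ T) {f : ℝ → ℝ}
    (hf : AbsContOn f 0 T) :
    ∀ᵐ t ∂(volume.restrict (Ioo (0:ℝ) T)), DifferentiableAt ℝ f t := by
  have hbv := (boundedVariationOn_of_absContOn hT hf).locallyBoundedVariationOn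
  have h := hbv.ae_differentiableWithinAt_of_mem
  rw [ae_restrict_iff' measurableSet_Ioo]
  filter_upwards [h] with x hx hxI
  have hw : DifferentiableWithinAt ℝ f (Icc 0 T) x := hx (Ioo_subset_Icc_self hxI)
  exact hw.differentiableAt (Icc_mem_nhds hxI.1 hxI.2)

/-- The pointwise maximum `f = max_i f_i` of finitely many absolutely
continuous functions on `[0,T]` is absolutely continuous, and if `i_*(t)` always attains the
maximum, then for almost every `t` both `f` and `f_{i_*(t)}` are differentiable at `t` with
`f'(t) = f_{i_*(t)}'(t)`. -/
theorem max_of_absolutely_continuous_functions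
    (n : ℕ) (hn : 0 < n) (T : ℝ) (hT : 0 ≤ T)
    (f : Fin n → ℝ → ℝ) (hf : ∀ i, AbsContOn (f i) 0 T)
    (istar : ℝ → Fin n)
    (histar : ∀ t ∈ Icc (0:ℝ) T, ∀ j, f j t ≤ f (istar t) t) :
    AbsContOn (fun t => ⨆ i, f i t) 0 T ∧
    ∀ᵐ t ∂(volume.restrict (Ioo (0:ℝ) T)),
      ∃ D, HasDerivAt (fun s => ⨆ i, f i s) D t ∧ HasDerivAt (f (istar t)) D t := by
  haveI : Nonempty (Fin n) := ⟨⟨0, hn⟩⟩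
  set g : ℝ → ℝ := fun t => ⨆ i, f i t with hg
  have hbdd : ∀ x : ℝ, BddAbove (Set.range fun i => f i x) := fun x =>
    Set.Finite.bddAbove (Set.finite_range _)
  have hle : ∀ (i : Fin n) (x : ℝ), f i x ≤ g x := fun i x => le_ciSup (hbdd x) i
  have key : ∀ x y : ℝ, dist (g x) (g y) ≤ ∑ i, dist (f i x) (f i y) := by
    have one_side : ∀ x y : ℝ, g x - g y ≤ ∑ i, dist (f i x) (f i y) := by
      intro x y
      obtain ⟨i, hi⟩ := Finite.exists_max (fun i => f i x)
      have h1 : g x ≤ f i x := ciSup_le hi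
      have h2 : f i y ≤ g y := hle i y
      have h3 : f i x - f i y ≤ dist (f i x) (f i y) := by
        rw [Real.dist_eq]; exact le_abs_self _
      have h4 : dist (f i x) (f i y) ≤ ∑ j, dist (f j x) (f j y) :=
        Finset.single_le_sum (f := fun j => dist (f j x) (f j y))
          (fun j _ => dist_nonneg) (Finset.mem_univ i)
      linarith
    intro x y
    rw [Real.dist_eq, abs_sub_le_iff]
    constructor
    · exact one_side x y
    · have := one_side y x
      simpa [dist_comm] using this
  have hgAC : AbsContOn g 0 T := by
    intro ε hε
    have hεn : (0 : ℝ) < ε / n := by positivity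
    have hchoice := fun i => hf i (ε / n) hεn
    choose δf hδpos hδspec using hchoice
    have huniv : (Finset.univ : Finset (Fin n)).Nonempty := Finset.univ_nonempty
    refine ⟨Finset.univ.inf' huniv δf, ?_, ?_⟩
    · exact (Finset.lt_inf'_iff huniv).2 fun i _ => hδpos i
    · intro m s t hst hpw hsum
      have hsum' : ∀ i : Fin n, (∑ k, (t k - s k)) < δf i := fun i =>
        hsum.trans_le (Finset.inf'_le _ (Finset.mem_univ i))
      calc (∑ k, dist (g (t k)) (g (s k)))
          ≤ ∑ k, ∑ i, dist (f i (t k)) (f i (s k)) :=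
            Finset.sum_le_sum fun k _ => key (t k) (s k)
        _ = ∑ i, ∑ k, dist (f i (t k)) (f i (s k)) := Finset.sum_comm
        _ < ∑ _i : Fin n, (ε / n) := by
            refine Finset.sum_lt_sum_of_nonempty huniv fun i _ => ?_
            exact hδspec i m s t hst hpw (hsum' i)
        _ = ε := by
            rw [Finset.sum_const, Finset.card_univ, Fintype.card_fin, nsmul_eq_mul]
            field_simp
  refine ⟨hgAC, ?_⟩
  have hdg := ae_differentiableAt_of_absContOn hT hgAC
  have hdf : ∀ᵐ t ∂(volume.restrict (Ioo (0:ℝ) T)), ∀ i, DifferentiableAt ℝ (f i) t :=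
    (ae_all_iff).2 fun i => ae_differentiableAt_of_absContOn hT (hf i)
  filter_upwards [hdg, hdf, ae_restrict_mem measurableSet_Ioo] with t hdgt hdft ht
  set i := istar t
  have hgt : g t = f i t :=
    le_antisymm (ciSup_le (histar t (Ioo_subset_Icc_self ht))) (hle i t)
  have hmin : IsLocalMin (fun s => g s - f i s) t := by
    apply Filter.Eventually.of_forall
    intro s
    have : f i s ≤ g s := hle i s
    simp only [hgt]
    linarith
  have hderiv : HasDerivAt (fun s => g s - f i s) (deriv g t - deriv (f i) t) t :=
    (hdgt.hasDerivAt).sub ((hdft i).hasDerivAt)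
  have hzero := hmin.hasDerivAt_eq_zero hderiv
  refine ⟨deriv g t, hdgt.hasDerivAt, ?_⟩
  have : deriv g t = deriv (f i) t := by linarith [hzero]
  rw [this]
  exact (hdft i).hasDerivAt
end
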